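/- arXiv:2012.09376 — 14 statements merged into one kernel-verified Lean document; each statement's English description precedes it below -/
import Mathlib

section
/- For any string s of length n over a finite ordered alphabet, any block length B with 1 ≤ B ≤ n/2, and any two indices i, j in [0, n) with i < j < i + B: if the cyclic substrings s[i..i+B-1], s[j..j+B-1] (indices taken mod n) both equal the length-B prefix of the lexicographically minimal rotation of s, then the minimal index achieving the lexicographically minimal rotation of s is not equal to j. -/
open scoped Classical

def cyc {α : Type*} {n : ℕ} [NeZero n] (s : Fin n → α) (i t : ℕ) : α :=
  s ⟨(i + t) % n, Nat.mod_lt _ (Nat.pos_of_ne_zero (NeZero.ne n))⟩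

def substr {α : Type*} {n : ℕ} [NeZero n] (s : Fin n → α) (i B : ℕ) : List α :=
  List.ofFn (fun t : Fin B => cyc s i t)

def rotFn {α : Type*} {n : ℕ} [NeZero n] (s : Fin n → α) (r : ℕ) : Fin n → α :=
  fun i => cyc s r i

def rotStr {α : Type*} {n : ℕ} [NeZero n] (s : Fin n → α) (k : ℕ) : List α :=
  substr s k n

def IsMinRot {α : Type*} [LinearOrder α] {n : ℕ} [NeZero n] (s : Fin n → α) (k : ℕ) : Prop :=
  k < n ∧ ∀ k' < n, rotStr s k ≤ rotStr s k'

noncomputable def LMSR {α : Type*} [LinearOrder α] {n : ℕ} [NeZero n] (s : Fin n → α) : ℕ :=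
  sInf {k | IsMinRot s k}

noncomputable def SCR {α : Type*} [LinearOrder α] {n : ℕ} [NeZero n] (s : Fin n → α) : List α :=
  rotStr s (LMSR s)

noncomputable def Csens {α : Type*} {n : ℕ} [NeZero n] (s : Fin n → α) : ℕ :=
  sInf {l | 0 < l ∧ ∀ i j : ℕ, i < j → j < n → substr s i l ≠ substr s j l}

def flipS {n : ℕ} (x : Fin n → Bool) (S : Finset (Fin n)) : Fin n → Bool :=
  fun i => if i ∈ S then !(x i) else x i

def HasBS {n : ℕ} (f : (Fin n → Bool) → ℕ) (x : Fin n → Bool) (m : ℕ) : Prop :=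
  ∃ S : Fin m → Finset (Fin n),
    (∀ i j : Fin m, i ≠ j → Disjoint (S i) (S j)) ∧ ∀ i, f (flipS x (S i)) ≠ f x

noncomputable def bs {n : ℕ} (f : (Fin n → Bool) → ℕ) (x : Fin n → Bool) : ℕ :=
  sSup {m | HasBS f x m}

noncomputable def LMSR0 {n : ℕ} [NeZero n] (x : Fin n → Bool) : ℕ := LMSR x % 2

def IsPer {α : Type*} {m : ℕ} (p : Fin m → α) (d : ℕ) : Prop :=
  0 < d ∧ ∀ i : ℕ, ∀ h : i + d < m, p ⟨i, by omega⟩ = p ⟨i + d, h⟩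

noncomputable def period {α : Type*} {m : ℕ} (p : Fin m → α) : ℕ :=
  sInf {d | IsPer p d}

def getZ {α : Type*} {m : ℕ} [NeZero m] (p : Fin m → α) (z : ℤ) : α :=
  p ⟨z.toNat % m, Nat.mod_lt _ (Nat.pos_of_ne_zero (NeZero.ne m))⟩

lemma lex_ofFn_lt {α : Type*} [LinearOrder α] : ∀ {m : ℕ} (f g : Fin m → α) (t0 : Fin m),
    (∀ t : Fin m, t < t0 → f t = g t) → f t0 < g t0 →
    List.ofFn f < List.ofFn g
  | 0, _, _, t0, _, _ => t0.elim0
  | (m+1), f, g, t0, hag, hlt => by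
    show List.Lex (· < ·) _ _
    rw [List.ofFn_succ, List.ofFn_succ]
    rcases Fin.eq_zero_or_eq_succ t0 with h0 | ⟨t1, rfl⟩
    · subst h0; exact List.Lex.rel hlt
    · have h00 : f 0 = g 0 := hag 0 (Fin.succ_pos t1)
      rw [h00]
      refine List.Lex.cons ?_
      have := lex_ofFn_lt (f ∘ Fin.succ) (g ∘ Fin.succ) t1
        (fun t ht => hag t.succ (Fin.succ_lt_succ_iff.mpr ht)) hlt
      exact this

theorem stmt0 {α : Type*} [LinearOrder α] {n B : ℕ} [NeZero n] (s : Fin n → α)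
    (hB1 : 1 ≤ B) (hB2 : 2 * B ≤ n) (i j : ℕ)
    (hij : i < j) (hji : j < i + B) (hjn : j < n)
    (h1 : substr s i B = substr s (LMSR s) B)
    (h2 : substr s j B = substr s (LMSR s) B) :
    LMSR s ≠ j := by
  intro hLM
  have hn : 0 < n := Nat.pos_of_ne_zero (NeZero.ne n)
  set p := j - i with hp
  have hp0 : 0 < p := by omega
  have hpB : p < B := by omega
  have h12 : substr s i B = substr s j B := h1.trans h2.symm
  simp only [substr] at h12
  have hfun := List.ofFn_inj.mp h12
  have F1 : ∀ t, (ht : t < B) → cyc s i t = cyc s j t := fun t ht => congrFun hfun ⟨t, ht⟩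
  have F2 : ∀ t, p ≤ t → cyc s i t = cyc s j (t - p) := by
    intro t ht
    have h : i + t = j + (t - p) := by omega
    simp only [cyc, h]
  have F3 : ∀ t : ℕ, cyc s ((j + p) % n) t = cyc s j (p + t) := by
    intro t
    simp only [cyc]
    congr 1
    apply Fin.ext
    show ((j + p) % n + t) % n = (j + (p + t)) % n
    rw [Nat.mod_add_mod, Nat.add_assoc]
  -- rotStr as ofFn
  have hrot : ∀ k, rotStr s k = List.ofFn (rotFn s k) := fun k => rfl
  -- nonempty minimizer set
  have hne : {k | IsMinRot s k}.Nonempty := by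
    have h0 : (Finset.image (fun k => rotStr s k) (Finset.range n)).Nonempty :=
      Finset.Nonempty.image ⟨0, Finset.mem_range.mpr hn⟩ _
    obtain ⟨k, hk, hkeq⟩ := Finset.mem_image.mp (Finset.min'_mem _ h0)
    exact ⟨k, Finset.mem_range.mp hk, fun k' hk' => by
      rw [hkeq]
      exact Finset.min'_le _ _ (Finset.mem_image_of_mem _ (Finset.mem_range.mpr hk'))⟩
  have hmem : IsMinRot s j := by
    have := Nat.sInf_mem hne
    rwa [show sInf {k | IsMinRot s k} = j from hLM] at this
  have hmin := hmem.2
  by_cases heq : rotStr s i = rotStr s j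
  · have hmi : IsMinRot s i := ⟨by omega, fun k' hk' => heq ▸ hmin k' hk'⟩
    have hle2 : LMSR s ≤ i := Nat.sInf_le hmi
    omega
  have hlt : rotStr s j < rotStr s i := lt_of_le_of_ne (hmin i (by omega)) (fun h => heq h.symm)
  have hfne : rotFn s i ≠ rotFn s j := by
    intro h
    exact heq (by rw [hrot, hrot, h])
  have hex : ∃ t : ℕ, ∃ h : t < n, rotFn s i ⟨t, h⟩ ≠ rotFn s j ⟨t, h⟩ := by
    obtain ⟨x, hx⟩ := Function.ne_iff.mp hfne
    exact ⟨x.val, x.isLt, by simpa using hx⟩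
  set t0 := Nat.find hex with ht0def
  obtain ⟨ht0n, hdiff⟩ := Nat.find_spec hex
  have hagree : ∀ t, t < t0 → ∀ h : t < n, rotFn s i ⟨t, h⟩ = rotFn s j ⟨t, h⟩ := by
    intro t ht h
    have := Nat.find_min hex ht
    push_neg at this
    exact this h
  have hBt0 : B ≤ t0 := by
    by_contra hc
    push_neg at hc
    exact hdiff (F1 t0 hc)
  have hpt0 : p ≤ t0 := by omega
  have hstrict : rotFn s j ⟨t0, ht0n⟩ < rotFn s i ⟨t0, ht0n⟩ := by
    rcases lt_trichotomy (rotFn s j ⟨t0, ht0n⟩) (rotFn s i ⟨t0, ht0n⟩) with h | h | h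
    · exact h
    · exact absurd h.symm hdiff
    · exfalso
      have : List.ofFn (rotFn s i) < List.ofFn (rotFn s j) :=
        lex_ofFn_lt _ _ ⟨t0, ht0n⟩ (fun t ht => hagree t.val ht t.isLt) h
      rw [← hrot, ← hrot] at this
      exact absurd this (not_lt_of_gt hlt)
  have key : cyc s j t0 < cyc s j (t0 - p) := by
    calc cyc s j t0 = rotFn s j ⟨t0, ht0n⟩ := by simp [rotFn]
    _ < rotFn s i ⟨t0, ht0n⟩ := hstrict
    _ = cyc s i t0 := by simp [rotFn]
    _ = cyc s j (t0 - p) := F2 t0 hpt0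
  have hper : ∀ t, p ≤ t → t < t0 → cyc s j t = cyc s j (t - p) := by
    intro t htp htt
    have htn : t < n := lt_trans htt ht0n
    calc cyc s j t = rotFn s j ⟨t, htn⟩ := by simp [rotFn]
    _ = rotFn s i ⟨t, htn⟩ := (hagree t htt htn).symm
    _ = cyc s i t := by simp [rotFn]
    _ = cyc s j (t - p) := F2 t htp
  -- final contradiction: rotation at (j+p)%n is smaller than rotation at j
  have ht1n : t0 - p < n := by omega
  have hfinal : List.ofFn (rotFn s ((j + p) % n)) < List.ofFn (rotFn s j) := by
    apply lex_ofFn_lt _ _ ⟨t0 - p, ht1n⟩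
    · intro t ht
      have htv : (t : ℕ) < t0 - p := ht
      show cyc s ((j + p) % n) t = cyc s j t
      rw [F3]
      have := hper (p + t) (by omega) (by omega)
      simpa using this
    · show cyc s ((j + p) % n) (t0 - p) < cyc s j (t0 - p)
      rw [F3]
      have hpp : p + (t0 - p) = t0 := by omega
      rw [hpp]
      exact key
  rw [← hrot, ← hrot] at hfinal
  exact absurd (hmin ((j + p) % n) (Nat.mod_lt _ hn)) (not_le_of_gt hfinal)
end

section
/- Let s be a string of length n whose length-B prefix of its minimal rotation has the form a·b·a where |a| ≥ 1, |b| ≥ 0, and B = 2|a| + |b| ≤ n/2. Then for every m > 0 and every index i in [0, n), if the cyclic substring s[i..i+|b|+|a|-1] equals b·a, then the cyclic substring s[i..i+m-1] is lexicographically at most the cyclic substring s[i+|b|+|a| .. i+|b|+|a|+m-1]. -/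
open scoped Classical

lemma cyc_congr {α : Type*} {n : ℕ} [NeZero n] (s : Fin n → α) {a a' t t' : ℕ}
    (h1 : a = a') (h2 : t = t') : cyc s a t = cyc s a' t' := by rw [h1, h2]

lemma cyc_add {α : Type*} {n : ℕ} [NeZero n] (s : Fin n → α) (a b c : ℕ) :
    cyc s a (b + c) = cyc s (a + b) c := by
  simp [cyc, Nat.add_assoc]

lemma cyc_mod {α : Type*} {n : ℕ} [NeZero n] (s : Fin n → α) (a b : ℕ) :
    cyc s (a % n) b = cyc s a b := by
  simp [cyc, Nat.mod_add_mod]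

lemma lex_ofFn {α : Type*} [LinearOrder α] (f g : ℕ → α) : ∀ (N t : ℕ), t < N →
    (∀ y < t, f y = g y) → f t < g t →
    List.Lex (· < ·) (List.ofFn (fun x : Fin N => f x)) (List.ofFn (fun x : Fin N => g x)) := by
  intro N
  induction N generalizing f g with
  | zero => omega
  | succ N ih =>
    intro t ht heq hlt
    rw [List.ofFn_succ, List.ofFn_succ]
    cases t with
    | zero => exact List.Lex.rel hlt
    | succ t =>
      have h0 : f (((0 : Fin (N+1)) : ℕ)) = g (((0 : Fin (N+1)) : ℕ)) := heq 0 (by omega)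
      rw [h0]
      have := ih (fun x => f (x+1)) (fun x => g (x+1)) t (by omega)
        (fun y hy => heq (y+1) (by omega)) hlt
      refine List.Lex.cons ?_
      convert this using 2
      all_goals rfl

lemma substr_lt {α : Type*} [LinearOrder α] {n : ℕ} [NeZero n] (s : Fin n → α)
    (a b N t : ℕ) (ht : t < N) (heq : ∀ y < t, cyc s a y = cyc s b y)
    (hlt : cyc s a t < cyc s b t) : substr s a N < substr s b N :=
  lex_ofFn (cyc s a) (cyc s b) N t ht heq hlt

lemma isMinRot_LMSR {α : Type*} [LinearOrder α] {n : ℕ} [NeZero n] (s : Fin n → α) :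
    IsMinRot s (LMSR s) := by
  have hn : 0 < n := Nat.pos_of_ne_zero (NeZero.ne n)
  have hne : ∃ k, IsMinRot s k := by
    obtain ⟨k, hk, hmin⟩ := Finset.exists_min_image (Finset.range n) (fun k => rotStr s k)
      ⟨0, Finset.mem_range.mpr hn⟩
    exact ⟨k, Finset.mem_range.mp hk, fun k' hk' => hmin k' (Finset.mem_range.mpr hk')⟩
  exact Nat.sInf_mem hne

theorem stmt1 {α : Type*} [LinearOrder α] {n A Bb B : ℕ} [NeZero n] (s : Fin n → α)
    (hA : 1 ≤ A) (hB : B = 2 * A + Bb) (hBn : 2 * B ≤ n)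
    (haba : ∀ t < A, cyc s (LMSR s) t = cyc s (LMSR s + A + Bb) t)
    (m : ℕ) (hm : 0 < m) (i : ℕ) (hi : i < n)
    (hba : substr s i (Bb + A) = substr s (LMSR s + A) (Bb + A)) :
    substr s i m ≤ substr s (i + Bb + A) m := by
  have hn : 0 < n := Nat.pos_of_ne_zero (NeZero.ne n)
  set k := LMSR s with hk
  set u := Bb + A with hu
  have hu1 : 1 ≤ u := by omega
  have hiu : i + Bb + A = i + u := by omega
  rw [hiu]
  -- pointwise form of hba
  have hba' : ∀ x < u, cyc s i x = cyc s (k + A) x := by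
    intro x hx
    have h := List.ofFn_inj.mp hba
    exact congrFun h ⟨x, hx⟩
  by_cases hall : ∀ x < m, cyc s i x = cyc s (i + u) x
  · apply le_of_eq
    unfold substr
    congr 1
    funext x
    exact hall x x.isLt
  · push_neg at hall
    have hex : ∃ x, x < m ∧ cyc s i x ≠ cyc s (i + u) x := by
      obtain ⟨x, h1, h2⟩ := hall; exact ⟨x, h1, h2⟩
    set t := Nat.find hex with htdef
    obtain ⟨htm, htne⟩ : t < m ∧ cyc s i t ≠ cyc s (i + u) t := Nat.find_spec hex
    have heqb : ∀ y < t, cyc s i y = cyc s (i + u) y := by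
      intro y hy
      by_contra hne
      exact (Nat.find_min hex hy) ⟨by omega, hne⟩
    rcases lt_trichotomy (cyc s i t) (cyc s (i + u) t) with hlt | heq | hgt
    · exact le_of_lt (substr_lt s i (i + u) m t htm heqb hlt)
    · exact absurd heq htne
    · exfalso
      have hmin := isMinRot_LMSR s
      rw [← hk] at hmin
      -- periodicity
      have hper : ∀ x, x < u + t → cyc s i x = cyc s (k + A) (x % u) := by
        intro x
        induction x using Nat.strong_induction_on with
        | _ x ih =>
          intro hx
          by_cases hxu : x < u
          · rw [Nat.mod_eq_of_lt hxu]; exact hba' x hxu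
          · push_neg at hxu
            have h1 : cyc s i x = cyc s (i + u) (x - u) := by
              rw [← cyc_add s i u (x - u)]
              exact cyc_congr s rfl (by omega)
            rw [h1, ← heqb (x - u) (by omega), ih (x - u) (by omega) (by omega),
              Nat.mod_eq_sub_mod hxu]
      -- the contradiction rotation
      set r := t % u with hr
      set q := u * (t / u) with hq
      have hqr : q + r = t := Nat.div_add_mod t u
      have hru : r < u := Nat.mod_lt _ (by omega)
      set j0 := i + q + Bb with hj0
      have hjy : ∀ y < A + r, cyc s j0 y = cyc s k y := by
        intro y hy
        have e1 : cyc s j0 y = cyc s i (q + Bb + y) := by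
          rw [cyc_add s i (q + Bb) y]; exact cyc_congr s (by omega) rfl
        have e2 : cyc s i (q + Bb + y) = cyc s (k + A) ((q + Bb + y) % u) :=
          hper _ (by omega)
        have e3 : (q + Bb + y) % u = (Bb + y) % u := by
          rw [hq, Nat.add_assoc, Nat.mul_add_mod]
        rw [e1, e2, e3]
        by_cases hyA : y < A
        · rw [Nat.mod_eq_of_lt (by omega)]
          have h4 := haba y hyA
          rw [← cyc_add s k A (Bb + y)]
          rw [show A + (Bb + y) = (A + Bb) + y by omega, cyc_add s k (A + Bb) y]
          exact (cyc_congr s (by omega) rfl).trans h4.symm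
        · push_neg at hyA
          have e4 : (Bb + y) % u = y - A := by
            rw [show Bb + y = u + (y - A) by omega, Nat.add_mod_left,
              Nat.mod_eq_of_lt (by omega)]
          rw [e4, ← cyc_add s k A (y - A)]
          exact cyc_congr s rfl (by omega)
      have hjlt : cyc s j0 (A + r) < cyc s k (A + r) := by
        have e1 : cyc s j0 (A + r) = cyc s (i + u) t := by
          calc cyc s j0 (A + r) = cyc s (i + (q + Bb)) (A + r) := cyc_congr s (by omega) rfl
            _ = cyc s i (q + Bb + (A + r)) := (cyc_add s i (q + Bb) (A + r)).symm
            _ = cyc s i (u + t) := cyc_congr s rfl (by omega)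
            _ = cyc s (i + u) t := cyc_add s i u t
        have e2 : cyc s k (A + r) = cyc s i t := by
          rw [cyc_add s k A r, ← hper t (by omega)]
        rw [e1, e2]
        exact hgt
      have hArn : A + r < n := by omega
      have hlt2 : rotStr s j0 < rotStr s k :=
        substr_lt s j0 k n (A + r) hArn hjy hjlt
      have hge : rotStr s k ≤ rotStr s (j0 % n) := hmin.2 (j0 % n) (Nat.mod_lt _ hn)
      have heqr : rotStr s (j0 % n) = rotStr s j0 := by
        unfold rotStr substr
        congr 1
        funext x
        exact cyc_mod s j0 x
      rw [heqr] at hge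
      exact absurd hlt2 (not_lt_of_ge hge)
end

section
/- For every binary string x of length n, the block sensitivity of LMSR₀ at x is at least ⌊ n/(4·C(x)) − 1/4 ⌋, where C(x) is the string sensitivity of x. -/
open scoped Classical

lemma lex_ofFn_s3 {m : ℕ} (f g : Fin m → Bool) (d : ℕ) (hd : d < m)
    (hpre : ∀ t (ht : t < m), t < d → f ⟨t,ht⟩ = g ⟨t,ht⟩)
    (hf : f ⟨d,hd⟩ = false) (hg : g ⟨d,hd⟩ = true) :
    List.ofFn f < List.ofFn g := by
  show List.Lex _ _ _
  induction m generalizing d with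
  | zero => omega
  | succ m ih =>
    rw [List.ofFn_succ, List.ofFn_succ]
    cases d with
    | zero =>
      apply List.Lex.rel
      rw [show f 0 = false from hf, show g 0 = true from hg]
      exact Bool.false_lt_true
    | succ d =>
      rw [show f 0 = g 0 from hpre 0 (Nat.succ_pos m) (Nat.succ_pos d)]
      apply List.Lex.cons
      exact ih (fun i => f i.succ) (fun i => g i.succ) d (by omega)
        (fun t ht htd => hpre (t+1) (by omega) (by omega)) hf hg

def yfun {n : ℕ} [NeZero n] (x : Fin n → Bool) (q l : ℕ) : Fin n → Bool :=
  fun i => if (i:ℕ) = q - 1 then true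
    else if q ≤ (i:ℕ) ∧ (i:ℕ) < q + l + 1 then false else x i

lemma lmsr_yfun {n l : ℕ} [NeZero n] (x : Fin n → Bool) (q : ℕ)
    (hq1 : 1 ≤ q) (hqn : q + l + 1 ≤ n) (hl : 1 ≤ l)
    (hrun : ∀ i : ℕ, ∃ r, r ≤ l ∧
      x ⟨(i + r) % n, Nat.mod_lt _ (Nat.pos_of_ne_zero (NeZero.ne n))⟩ = true) :
    LMSR (yfun x q l) = q := by
  have npos : 0 < n := Nat.pos_of_ne_zero (NeZero.ne n)
  set y := yfun x q l with hy
  set Y : ℕ → Bool := fun p => y ⟨p % n, Nat.mod_lt _ npos⟩ with hY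
  have Yeq : ∀ p p' : ℕ, p % n = p' % n → Y p = Y p' := by
    intro p p' h; simp only [hY, h]
  have Yval : ∀ p (hp : p < n), Y p = (if p = q - 1 then true
      else if q ≤ p ∧ p < q + l + 1 then false else x ⟨p, hp⟩) := by
    intro p hp
    simp only [hY, hy, yfun, Nat.mod_eq_of_lt hp]
  have Yx : ∀ p (hp : p < n), p ≠ q - 1 → ¬(q ≤ p ∧ p < q + l + 1) →
      Y p = x ⟨p, hp⟩ := by
    intro p hp h1 h2; rw [Yval p hp, if_neg h1, if_neg h2]
  have Yqm1 : Y (q - 1) = true := by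
    rw [Yval (q-1) (by omega), if_pos rfl]
  have Yzero : ∀ d, d ≤ l → Y (q + d) = false := by
    intro d hd
    rw [Yval (q+d) (by omega), if_neg (by omega), if_pos (by omega)]
  have hwrap : Y (q + (n-1)) = true := by
    rw [Yeq (q + (n-1)) (q-1) ?_]
    · exact Yqm1
    · rw [show q + (n-1) = (q-1) + n by omega, Nat.add_mod_right]
  have hex : ∃ d, Y (q + d) = true := ⟨n - 1, hwrap⟩
  set Z := Nat.find hex with hZ
  have hZtrue : Y (q + Z) = true := Nat.find_spec hex
  have hZmin : ∀ d, d < Z → Y (q + d) = false := by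
    intro d hd
    have := Nat.find_min hex hd
    simpa using this
  have hZl : l + 1 ≤ Z := by
    by_contra h
    rw [Yzero Z (by omega)] at hZtrue; exact Bool.false_ne_true hZtrue
  have hZn : Z ≤ n - 1 := Nat.find_min' hex hwrap
  have key : ∀ e, 1 ≤ e → e < n → ∃ d, d < Z ∧ Y (q + e + d) = true := by
    intro e he1 hen
    by_contra hcon
    push_neg at hcon
    have hall : ∀ d, d < Z → Y (q + e + d) = false := by
      intro d hd
      exact Bool.eq_false_iff.mpr (hcon d hd)
    have he2 : ¬ (e ≤ Z) := by
      intro h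
      have := hall (Z - e) (by omega)
      rw [show q + e + (Z - e) = q + Z by omega] at this
      rw [this] at hZtrue; exact Bool.false_ne_true hZtrue
    have he3 : e ≤ n - 1 - Z := by
      by_contra h
      have h2 := hall (n - 1 - e) (by omega)
      rw [show q + e + (n-1-e) = q + (n-1) by omega] at h2
      rw [h2] at hwrap; exact Bool.false_ne_true hwrap
    obtain ⟨r, hr, hxr⟩ := hrun (q + e)
    have hfalse : Y (q + e + r) = false := hall r (by omega)
    set p := (q + e + r) % n with hpdef
    have hpn : p < n := Nat.mod_lt _ npos
    have hYp : Y (q + e + r) = Y p := Yeq _ _ (Nat.mod_eq_of_lt hpn).symm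
    have hxr' : x ⟨p, hpn⟩ = true := hxr
    have ho : l + 2 ≤ e + r ∧ e + r ≤ n - 2 := by omega
    have hpval : (q + e + r < n ∧ p = q + e + r) ∨ (n ≤ q + e + r ∧ p = q + e + r - n) := by
      rcases Nat.lt_or_ge (q+e+r) n with hc | hc
      · exact Or.inl ⟨hc, by rw [hpdef, Nat.mod_eq_of_lt hc]⟩
      · refine Or.inr ⟨hc, ?_⟩
        have h2 : q+e+r-n < n := by omega
        rw [hpdef, show q+e+r = (q+e+r-n)+n by omega, Nat.add_mod_right, Nat.mod_eq_of_lt h2]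
        omega
    have hyx : Y p = x ⟨p, hpn⟩ := by
      rcases hpval with ⟨hc, hpe⟩ | ⟨hc, hpe⟩
      · exact Yx p hpn (by omega) (by omega)
      · exact Yx p hpn (by omega) (by omega)
    rw [hYp, hyx, hxr'] at hfalse
    simp at hfalse
  have strict : ∀ j, j < n → j ≠ q → rotStr y q < rotStr y j := by
    intro j hj hjq
    set e := (j + (n - q)) % n with he
    have hqe : (q + e) % n = j := by
      rw [he, Nat.add_mod_mod, show q + (j + (n - q)) = j + n by omega,
        Nat.add_mod_right, Nat.mod_eq_of_lt hj]
    have he1 : 1 ≤ e := by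
      rcases Nat.eq_zero_or_pos e with h0 | h
      · exfalso; apply hjq
        rw [h0, Nat.add_zero, Nat.mod_eq_of_lt (by omega)] at hqe
        omega
      · exact h
    have hen : e < n := Nat.mod_lt _ npos
    obtain ⟨d, hdZ, hdtrue⟩ := key e he1 hen
    have hjd : ∀ t : ℕ, Y (j + t) = Y (q + e + t) := by
      intro t; apply Yeq
      conv_lhs => rw [← hqe]
      rw [Nat.mod_add_mod]
    have hexj : ∃ d, Y (j + d) = true := ⟨d, by rw [hjd]; exact hdtrue⟩
    set d0 := Nat.find hexj with hd0def
    have hd0 : Y (j + d0) = true := Nat.find_spec hexj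
    have hd0min : ∀ t, t < d0 → Y (j + t) = false := by
      intro t ht
      exact Bool.eq_false_iff.mpr (Nat.find_min hexj ht)
    have hd0Z : d0 < Z :=
      Nat.lt_of_le_of_lt (Nat.find_min' hexj (by rw [hjd]; exact hdtrue)) hdZ
    show substr y q n < substr y j n
    apply lex_ofFn_s3 _ _ d0 (by omega)
    · intro t ht htd0
      show Y (q + t) = Y (j + t)
      rw [hZmin t (by omega), hd0min t htd0]
    · exact hZmin d0 hd0Z
    · exact hd0
  have hmem : IsMinRot y q := by
    refine ⟨by omega, fun k' hk' => ?_⟩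
    by_cases h : k' = q
    · rw [h]
    · exact le_of_lt (strict k' hk' h)
  have huniq : ∀ k, IsMinRot y k → k = q := by
    intro k hk
    by_contra h
    have h1 := strict k hk.1 h
    have h2 := hk.2 q (by omega)
    exact absurd (lt_of_lt_of_le h1 h2) (lt_irrefl _)
  have hset : {k | IsMinRot y k} = {q} :=
    Set.eq_singleton_iff_unique_mem.mpr ⟨hmem, huniq⟩
  rw [LMSR, hset, csInf_singleton]

lemma block_exists {n l : ℕ} [NeZero n] (x : Fin n → Bool) (hl2 : 2 ≤ l)
    (b : ℕ) (hb : b + (l+4) ≤ n)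
    (hrun : ∀ i : ℕ, ∃ r, r ≤ l ∧
      x ⟨(i + r) % n, Nat.mod_lt _ (Nat.pos_of_ne_zero (NeZero.ne n))⟩ = true) :
    ∃ S : Finset (Fin n),
      (∀ i : Fin n, i ∈ S → b ≤ (i:ℕ) ∧ (i:ℕ) < b + (l+4)) ∧
      LMSR0 (flipS x S) ≠ LMSR0 x := by
  set q : ℕ := b + 1 + (if (b+1) % 2 = LMSR x % 2 then 1 else 0) with hq
  have hqb : b + 1 ≤ q ∧ q ≤ b + 2 := by rw [hq]; split <;> omega
  have hq1 : 1 ≤ q := by omega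
  have hqn : q + l + 1 ≤ n := by omega
  have hpar : q % 2 ≠ LMSR x % 2 := by
    rw [hq]; split
    · next h => omega
    · next h => simpa using h
  refine ⟨Finset.univ.filter (fun i => yfun x q l i ≠ x i), ?_, ?_⟩
  · intro i hi
    simp only [Finset.mem_filter, Finset.mem_univ, true_and] at hi
    by_contra hcon
    apply hi
    show yfun x q l i = x i
    simp only [yfun]
    rw [if_neg (by omega), if_neg (by omega)]
  · have hflip : flipS x (Finset.univ.filter (fun i => yfun x q l i ≠ x i)) = yfun x q l := by
      funext i
      simp only [flipS, Finset.mem_filter, Finset.mem_univ, true_and]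
      by_cases h : yfun x q l i = x i
      · rw [if_neg (by simp [h]), h]
      · rw [if_pos h]
        cases hxi : x i <;> cases hyi : yfun x q l i <;> simp_all
    rw [hflip, LMSR0, LMSR0, lmsr_yfun x q hq1 hqn (by omega) hrun]
    exact hpar

theorem stmt3 {n : ℕ} [NeZero n] (x : Fin n → Bool) :
    (n - Csens x) / (4 * Csens x) ≤ bs LMSR0 x := by
  have npos : 0 < n := Nat.pos_of_ne_zero (NeZero.ne n)
  set l := Csens x with hl
  set m := (n - l) / (4 * l) with hm
  rcases Nat.eq_zero_or_pos m with h0 | hmpos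
  · exact h0 ▸ Nat.zero_le _
  have hlpos : 0 < l := by
    by_contra h
    have hz : l = 0 := by omega
    rw [hz] at hm
    simp at hm
    omega
  have hsetne : {L | 0 < L ∧ ∀ i j : ℕ, i < j → j < n → substr x i L ≠ substr x j L}.Nonempty := by
    by_contra h
    rw [Set.not_nonempty_iff_eq_empty] at h
    have hz : l = 0 := by rw [hl]; show sInf _ = 0; rw [h]; exact Nat.sInf_empty
    omega
  have hlmem : 0 < l ∧ ∀ i j : ℕ, i < j → j < n → substr x i l ≠ substr x j l :=
    Nat.sInf_mem hsetne
  have hdist := hlmem.2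
  have hn5 : 4 * l * m + l ≤ n := by
    have h1 : 4 * l * m ≤ n - l := by
      rw [hm, mul_comm]
      exact Nat.div_mul_le_self _ _
    have h3 : 0 < 4 * l * m := by positivity
    omega
  have hn5' : 5 ≤ n := by
    have h4 : 4 * 1 * 1 ≤ 4 * l * m :=
      Nat.mul_le_mul (Nat.mul_le_mul_left _ hlpos) hmpos
    omega
  -- substrings of length 1 can't be distinct if n ≥ 3
  have hl2 : 2 ≤ l := by
    by_contra h
    have hl1 : l = 1 := by omega
    have e1 : ∀ (i:ℕ) (hi : i < n), substr x i 1 = [x ⟨i, hi⟩] := by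
      intro i hi
      simp only [substr, List.ofFn_succ, List.ofFn_zero, cyc]
      congr 1
      apply congrArg
      apply Fin.ext
      simp [Nat.mod_eq_of_lt hi]
    have key1 : ∀ (i j : ℕ) (hi : i < n) (hj : j < n), i < j → x ⟨i,hi⟩ ≠ x ⟨j,hj⟩ := by
      intro i j hi hj hij hcontra
      apply hdist i j hij hj
      rw [hl1, e1 i hi, e1 j hj, hcontra]
    have b01 := key1 0 1 (by omega) (by omega) (by omega)
    have b02 := key1 0 2 (by omega) (by omega) (by omega)
    have b12 := key1 1 2 (by omega) (by omega) (by omega)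
    cases hx0 : x ⟨0, by omega⟩ <;> cases hx1 : x ⟨1, by omega⟩ <;>
      cases hx2 : x ⟨2, by omega⟩ <;> simp_all
  -- zero-run bound
  have hrun : ∀ i : ℕ, ∃ r, r ≤ l ∧
      x ⟨(i + r) % n, Nat.mod_lt _ (Nat.pos_of_ne_zero (NeZero.ne n))⟩ = true := by
    intro i
    by_contra hcon
    push_neg at hcon
    have hallf : ∀ r, r ≤ l → ∀ (hp : (i + r) % n < n), x ⟨(i + r) % n, hp⟩ = false := by
      intro r hr hp
      exact Bool.eq_false_iff.mpr (hcon r hr)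
    have hsub : ∀ c : ℕ, c ≤ 1 → substr x ((i+c) % n) l = List.replicate l false := by
      intro c hc
      apply List.eq_replicate_iff.mpr
      refine ⟨by simp [substr], ?_⟩
      intro a ha
      rw [substr, List.mem_ofFn] at ha
      obtain ⟨t, hta⟩ := ha
      rw [← hta]
      show cyc x ((i+c) % n) t = false
      rw [cyc]
      have hmod : ((i+c) % n + (t:ℕ)) % n = (i + (c + (t:ℕ))) % n := by
        rw [Nat.mod_add_mod]; congr 1; omega
      have : x ⟨((i+c) % n + (t:ℕ)) % n, Nat.mod_lt _ npos⟩
          = x ⟨(i + (c + (t:ℕ))) % n, Nat.mod_lt _ npos⟩ := by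
        apply congrArg; exact Fin.ext hmod
      rw [this]
      exact hallf (c + (t:ℕ)) (by omega) _
    set a := i % n with ha
    set b := (i+1) % n with hb2
    have han : a < n := Nat.mod_lt _ npos
    have hbn : b < n := Nat.mod_lt _ npos
    have hne : a ≠ b := by
      intro hab
      have : (i + 1) % n = i % n := by rw [← ha, ← hb2, hab]
      have hdvd : n ∣ (i+1) - i := (Nat.modEq_iff_dvd' (by omega)).mp this.symm
      simp at hdvd
      omega
    have hsa : substr x a l = List.replicate l false := by
      have := hsub 0 (by omega)
      rw [show i + 0 = i from rfl] at this
      exact this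
    have hsb : substr x b l = List.replicate l false := by
      exact hsub 1 (by omega)
    rcases Nat.lt_or_ge a b with hab | hab
    · exact hdist a b hab hbn (by rw [hsa, hsb])
    · have hba : b < a := by omega
      exact hdist b a hba han (by rw [hsa, hsb])
  -- construct the blocks
  have hbound : ∀ t : Fin m, (t:ℕ)*(l+4) + (l+4) ≤ n := by
    intro t
    calc (t:ℕ)*(l+4) + (l+4) = ((t:ℕ)+1)*(l+4) := by ring
      _ ≤ m*(l+4) := Nat.mul_le_mul_right _ t.isLt
      _ ≤ m*(4*l) := Nat.mul_le_mul_left _ (by omega)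
      _ = 4*l*m := by ring
      _ ≤ n := by omega
  choose Sf hS1 hS2 using fun t : Fin m =>
    block_exists x hl2 ((t:ℕ)*(l+4)) (hbound t) hrun
  have hdisj : ∀ i j : Fin m, i ≠ j → Disjoint (Sf i) (Sf j) := by
    intro i j hij
    rw [Finset.disjoint_left]
    intro a hai haj
    have b1 := hS1 i a hai
    have b2 := hS1 j a haj
    have hstep : ∀ u v : Fin m, (u:ℕ) < (v:ℕ) →
        (u:ℕ)*(l+4) + (l+4) ≤ (v:ℕ)*(l+4) := by
      intro u v huv
      calc (u:ℕ)*(l+4)+(l+4) = ((u:ℕ)+1)*(l+4) := by ring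
        _ ≤ (v:ℕ)*(l+4) := Nat.mul_le_mul_right _ huv
    rcases Nat.lt_or_ge (i:ℕ) (j:ℕ) with h | h
    · have := hstep i j h; omega
    · have hji : (j:ℕ) < (i:ℕ) := by
        rcases Nat.lt_or_ge (j:ℕ) (i:ℕ) with h' | h'
        · exact h'
        · exact absurd (Fin.ext (by omega)) hij
      have := hstep j i hji; omega
  have hbdd : BddAbove {m' | HasBS (LMSR0 (n := n)) x m'} := by
    refine ⟨n, fun m' hm' => ?_⟩
    obtain ⟨T, hTdisj, hTne⟩ := hm'
    have hTnon : ∀ i, (T i).Nonempty := by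
      intro i
      rcases (T i).eq_empty_or_nonempty with h | h
      · exfalso; apply hTne i; rw [h]
        have he : flipS x (∅ : Finset (Fin n)) = x := by
          funext j; simp [flipS]
        rw [he]
      · exact h
    have hinj : Function.Injective (fun i => (T i).min' (hTnon i)) := by
      intro i j hij
      change (T i).min' (hTnon i) = (T j).min' (hTnon j) at hij
      by_contra h
      have hd := hTdisj i j h
      have h1 : (T j).min' (hTnon j) ∈ T i := by
        rw [← hij]; exact Finset.min'_mem _ _
      exact (Finset.disjoint_left.mp hd h1) (Finset.min'_mem _ _)
    simpa using Fintype.card_le_of_injective _ hinj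
  exact le_csSup hbdd ⟨Sf, hdisj, hS2⟩
end

section
/- Let s be a uniformly random string over an alphabet of size α ≥ 2, of length n, and let B satisfy 1 ≤ B ≤ n/2. Then the probability that the string sensitivity C(s) is at most B is at least 1 − n(n−1)·α^{−B}/2. -/
open scoped Classical

lemma bez (d n : ℕ) (hn : 0 < n) : ∃ u : ℕ, 1 ≤ u ∧ u * d ≡ Nat.gcd d n [MOD n] := by
  have hb := Nat.gcd_eq_gcd_ab d n
  set a := Nat.gcdA d n with ha
  refine ⟨((a % n).toNat + n), by omega, ?_⟩
  have hnn : (0:ℤ) < n := by exact_mod_cast hn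
  have h0 : (0:ℤ) ≤ a % n := Int.emod_nonneg a (by omega)
  have hcast : (((a % n).toNat + n : ℕ) : ℤ) = a % n + n := by
    push_cast [Int.toNat_of_nonneg h0]; ring
  rw [Nat.modEq_iff_dvd]
  push_cast [hcast]
  have hmod : a % n = a - n * (a / n) := by rw [Int.emod_def]
  rw [hmod]
  have : (Nat.gcd d n : ℤ) - (a - n * (a / n) + n) * d
      = n * (Nat.gcdB d n + (a/n) * d - d) := by rw [hb]; ring
  rw [this]
  exact Dvd.intro _ rfl

lemma exitA (n B i d x : ℕ) (hd1 : 1 ≤ d) (hdn : d < n) (hB1 : 1 ≤ B) (hB2 : 2*B ≤ n) :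
    ∃ k, 1 ≤ k ∧ ¬ (∃ t, t < B ∧ (x + k*d) % n = (i + t) % n) := by
  classical
  have hn : 0 < n := by omega
  by_contra hcon
  push_neg at hcon
  set g := Nat.gcd d n with hg
  have hg1 : 1 ≤ g := Nat.gcd_pos_of_pos_left n hd1
  have hgdvd : g ∣ n := Nat.gcd_dvd_right d n
  have hgd : g ≤ d := Nat.le_of_dvd hd1 (Nat.gcd_dvd_left d n)
  have hg2 : 2 * g ≤ n := by
    obtain ⟨c, hc⟩ := hgdvd
    rcases Nat.lt_or_ge c 2 with h | h
    · interval_cases c <;> omega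
    · calc 2 * g = g * 2 := by ring
        _ ≤ g * c := Nat.mul_le_mul_left g h
        _ = n := hc.symm
  obtain ⟨u, hu1, hu2⟩ := bez d n hn
  set T := (Finset.range B).filter (fun t => ∃ k, 1 ≤ k ∧ (i+t)%n = (x+k*d)%n) with hT
  have hTne : T.Nonempty := by
    obtain ⟨t, ht, he⟩ := hcon 1 le_rfl
    refine ⟨t, ?_⟩
    rw [hT, Finset.mem_filter, Finset.mem_range]
    exact ⟨ht, 1, le_rfl, he.symm⟩
  set tm := T.max' hTne with htm
  have hmem : tm ∈ T := T.max'_mem hTne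
  rw [hT, Finset.mem_filter, Finset.mem_range] at hmem
  obtain ⟨htmB, k₀, hk₀1, hk₀⟩ := hmem
  set k₁ := k₀ + u with hk₁
  obtain ⟨t', ht'B, ht'⟩ := hcon k₁ (by omega)
  -- (i + tm + g) ≡ (i + t') [MOD n]
  have step1 : (i + tm + g) ≡ (i + tm + u * d) [MOD n] := Nat.ModEq.add_left _ hu2.symm
  have step2 : (i + tm + u * d) ≡ (x + k₀ * d + u * d) [MOD n] := by
    have : (i + tm) ≡ (x + k₀ * d) [MOD n] := hk₀
    exact Nat.ModEq.add_right _ this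
  have step3 : x + k₀ * d + u * d = x + k₁ * d := by rw [hk₁]; ring
  have step4 : (x + k₁ * d) ≡ (i + t') [MOD n] := ht'
  have key : (i + (tm + g)) ≡ (i + t') [MOD n] := by
    have := ((step1.trans step2).trans (step3 ▸ step4))
    simpa [Nat.add_assoc] using this
  have key2 : (tm + g) ≡ t' [MOD n] := Nat.ModEq.add_left_cancel' i key
  have heq : tm + g = t' := by
    have h1 : (tm + g) % n = t' % n := key2
    rw [Nat.mod_eq_of_lt (by omega), Nat.mod_eq_of_lt (by omega)] at h1
    exact h1
  have ht'T : t' ∈ T := by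
    rw [hT, Finset.mem_filter, Finset.mem_range]
    exact ⟨ht'B, k₁, by omega, ht'.symm⟩
  have := T.le_max' t' ht'T
  omega

def fmod {n : ℕ} [NeZero n] (x : ℕ) : Fin n :=
  ⟨x % n, Nat.mod_lt _ (Nat.pos_of_ne_zero (NeZero.ne n))⟩

lemma det {Alp : Type*} {n : ℕ} [NeZero n] (B i d : ℕ) (hd1 : 1 ≤ d) (hdn : d < n)
    (hB1 : 1 ≤ B) (hB2 : 2*B ≤ n) (s s' : Fin n → Alp)
    (hs : ∀ t, t < B → s (fmod (i+t)) = s (fmod (i+t+d)))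
    (hs' : ∀ t, t < B → s' (fmod (i+t)) = s' (fmod (i+t+d)))
    (hout : ∀ x, x < n → (¬ ∃ t, t < B ∧ x = (i+t)%n) → s (fmod x) = s' (fmod x)) :
    ∀ x, x < n → s (fmod x) = s' (fmod x) := by
  have hn : 0 < n := Nat.pos_of_ne_zero (NeZero.ne n)
  have hex : ∀ x : ℕ, ∃ k, 1 ≤ k ∧ ¬(∃ t, t < B ∧ (x+k*d)%n = (i+t)%n) :=
    fun x => exitA n B i d x hd1 hdn hB1 hB2
  suffices H : ∀ N, ∀ x, x < n → Nat.find (hex x) ≤ N → s (fmod x) = s' (fmod x) by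
    intro x hx; exact H _ x hx le_rfl
  intro N
  induction N with
  | zero =>
    intro x hx h0
    have h1 := (Nat.find_spec (hex x)).1
    omega
  | succ N ih =>
    intro x hx hle
    by_cases hA : ∃ t, t < B ∧ x = (i+t)%n
    · obtain ⟨t, htB, hxe⟩ := hA
      set x₁ := (x + d) % n with hx₁def
      have e1 : fmod x = (fmod (i+t) : Fin n) := by
        apply Fin.ext
        simp only [fmod]
        rw [Nat.mod_eq_of_lt hx, hxe]
      have estep : (fmod (i+t+d) : Fin n) = fmod x₁ := by
        apply Fin.ext
        simp only [fmod]
        rw [hx₁def, Nat.mod_mod_of_dvd _ dvd_rfl, hxe, Nat.mod_add_mod]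
      have hsx : s (fmod x) = s (fmod x₁) := by rw [e1, hs t htB, estep]
      have hsx' : s' (fmod x) = s' (fmod x₁) := by rw [e1, hs' t htB, estep]
      by_cases hA1 : ∃ t', t' < B ∧ x₁ = (i+t')%n
      · have hx₁n : x₁ < n := Nat.mod_lt _ hn
        have hfind2 : 1 < Nat.find (hex x) := by
          rw [Nat.lt_find_iff]
          intro k hk
          interval_cases k
          · intro h; omega
          · intro h
            exact h.2 (by simpa [hx₁def, one_mul] using hA1)
        have hfind1 : Nat.find (hex x₁) ≤ Nat.find (hex x) - 1 := by
          apply Nat.find_le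
          constructor
          · omega
          · have harith : ∀ k : ℕ, (x₁ + k*d) % n = (x + (k+1)*d) % n := by
              intro k
              rw [hx₁def, Nat.mod_add_mod]
              ring_nf
            rw [harith]
            have : Nat.find (hex x) - 1 + 1 = Nat.find (hex x) := by omega
            rw [this]
            exact (Nat.find_spec (hex x)).2
        exact (hsx.trans (ih x₁ hx₁n (by omega))).trans hsx'.symm
      · exact hsx.trans ((hout x₁ (Nat.mod_lt _ hn) hA1).trans hsx'.symm)
    · exact hout x hx hA

lemma count {Alp : Type*} [Fintype Alp] [DecidableEq Alp] {n B : ℕ} [NeZero n]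
    (hB1 : 1 ≤ B) (hB2 : 2*B ≤ n) (i j : ℕ) (hij : i < j) (hj : j < n) :
    (Finset.univ.filter fun s : Fin n → Alp => substr s i B = substr s j B).card
      ≤ Fintype.card Alp ^ (n - B) := by
  have hn : 0 < n := Nat.pos_of_ne_zero (NeZero.ne n)
  set d := j - i with hd
  have hd1 : 1 ≤ d := by omega
  have hdn : d < n := by omega
  set Aset : Finset (Fin n) := (Finset.range B).image (fun t => fmod (i+t)) with hAset
  have hmemA : ∀ x : Fin n, x ∈ Aset ↔ ∃ t, t < B ∧ (x:ℕ) = (i+t)%n := by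
    intro x
    rw [hAset, Finset.mem_image]
    constructor
    · rintro ⟨t, ht, he⟩
      exact ⟨t, Finset.mem_range.mp ht, by rw [← he]; rfl⟩
    · rintro ⟨t, ht, he⟩
      exact ⟨t, Finset.mem_range.mpr ht, Fin.ext (by simp [fmod, ← he])⟩
  have hcardA : Aset.card = B := by
    rw [hAset, Finset.card_image_of_injOn, Finset.card_range]
    intro t₁ h₁ t₂ h₂ he
    rw [Finset.mem_coe, Finset.mem_range] at h₁ h₂
    have h3 : (i+t₁) ≡ (i+t₂) [MOD n] := congrArg Fin.val he
    have h4 : t₁ ≡ t₂ [MOD n] := h3.add_left_cancel' i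
    have h5 : t₁ % n = t₂ % n := h4
    rw [Nat.mod_eq_of_lt (by omega), Nat.mod_eq_of_lt (by omega)] at h5
    exact h5
  have key : ∀ t : ℕ, (fmod (j+t) : Fin n) = fmod (i+t+d) :=
    fun t => congrArg fmod (by omega)
  have hsubstr : ∀ s : Fin n → Alp, substr s i B = substr s j B ↔
      (∀ t, t < B → s (fmod (i+t)) = s (fmod (i+t+d))) := by
    intro s
    rw [substr, substr, List.ofFn_inj, funext_iff]
    constructor
    · intro h t ht
      have h2 : s (fmod (i + t)) = s (fmod (j + t)) := h ⟨t, ht⟩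
      rw [key t] at h2; exact h2
    · intro h t
      have h2 : s (fmod (i + t.1)) = s (fmod (i + t.1 + d)) := h t.1 t.2
      show s (fmod (i + t.1)) = s (fmod (j + t.1))
      rw [key t.1]; exact h2
  -- the injection into functions on the complement
  calc (Finset.univ.filter fun s : Fin n → Alp => substr s i B = substr s j B).card
      ≤ (Finset.univ : Finset ({x // x ∈ Asetᶜ} → Alp)).card := by
        apply Finset.card_le_card_of_injOn (fun s x => s x.1)
        · intro s _; exact Finset.mem_univ _
        · intro s hs s' hs' hff
          rw [Finset.mem_coe, Finset.mem_filter] at hs hs'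
          have hcs := (hsubstr s).mp hs.2
          have hcs' := (hsubstr s').mp hs'.2
          have hout : ∀ x, x < n → (¬ ∃ t, t < B ∧ x = (i+t)%n) →
              s (fmod x) = s' (fmod x) := by
            intro x hx hnx
            have hmem : (fmod x : Fin n) ∈ Asetᶜ := by
              rw [Finset.mem_compl, hmemA]
              simp only [fmod]
              rw [Nat.mod_eq_of_lt hx]
              exact hnx
            exact congrFun hff ⟨fmod x, hmem⟩
          have hdet := det B i d hd1 hdn hB1 hB2 s s' hcs hcs' hout
          funext x
          have : (fmod (x:ℕ) : Fin n) = x := Fin.ext (Nat.mod_eq_of_lt x.2)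
          rw [← this]
          exact hdet x.1 x.2
    _ = Fintype.card Alp ^ (n - B) := by
        rw [Finset.card_univ, Fintype.card_fun, Fintype.card_coe,
          Finset.card_compl, hcardA, Fintype.card_fin]

theorem stmt4 {Alp : Type*} [Fintype Alp] [DecidableEq Alp] {n B : ℕ} [NeZero n]
    (hα : 2 ≤ Fintype.card Alp) (hB1 : 1 ≤ B) (hB2 : 2 * B ≤ n) :
    (1 : ℝ) - (n : ℝ) * ((n : ℝ) - 1) / (2 * (Fintype.card Alp : ℝ) ^ B) ≤
      ((Finset.univ.filter fun s : Fin n → Alp =>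
          ∀ i j : ℕ, i < j → j < n → substr s i B ≠ substr s j B).card : ℝ) /
        (Fintype.card Alp : ℝ) ^ n := by
  classical
  have hn : 0 < n := Nat.pos_of_ne_zero (NeZero.ne n)
  set Good := Finset.univ.filter (fun s : Fin n → Alp =>
    ∀ i j : ℕ, i < j → j < n → substr s i B ≠ substr s j B) with hGood
  set Bad := Finset.univ.filter (fun s : Fin n → Alp =>
    ¬ ∀ i j : ℕ, i < j → j < n → substr s i B ≠ substr s j B) with hBad
  have hsum : Good.card + Bad.card = Fintype.card Alp ^ n := by
    rw [hGood, hBad, Finset.card_filter_add_card_filter_not,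
      Finset.card_univ, Fintype.card_fun, Fintype.card_fin]
  have hBadle : Bad.card ≤ (∑ j ∈ Finset.range n, j) * Fintype.card Alp ^ (n - B) := by
    have hsub : Bad ⊆ (Finset.range n).biUnion (fun j => (Finset.range j).biUnion (fun i =>
        Finset.univ.filter (fun s : Fin n → Alp => substr s i B = substr s j B))) := by
      intro s hsmem
      rw [hBad, Finset.mem_filter] at hsmem
      have h2 := hsmem.2
      push_neg at h2
      obtain ⟨i, j, hij, hjn, he⟩ := h2
      rw [Finset.mem_biUnion]
      exact ⟨j, Finset.mem_range.mpr hjn, Finset.mem_biUnion.mpr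
        ⟨i, Finset.mem_range.mpr hij, Finset.mem_filter.mpr ⟨Finset.mem_univ _, he⟩⟩⟩
    calc Bad.card ≤ _ := Finset.card_le_card hsub
      _ ≤ ∑ j ∈ Finset.range n, ((Finset.range j).biUnion (fun i =>
            Finset.univ.filter (fun s : Fin n → Alp => substr s i B = substr s j B))).card :=
          Finset.card_biUnion_le
      _ ≤ ∑ j ∈ Finset.range n, ∑ i ∈ Finset.range j,
            (Finset.univ.filter (fun s : Fin n → Alp => substr s i B = substr s j B)).card :=
          Finset.sum_le_sum (fun j _ => Finset.card_biUnion_le)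
      _ ≤ ∑ j ∈ Finset.range n, ∑ _i ∈ Finset.range j, Fintype.card Alp ^ (n - B) := by
          refine Finset.sum_le_sum (fun j hj => Finset.sum_le_sum (fun i hi => ?_))
          exact count hB1 hB2 i j (Finset.mem_range.mp hi) (Finset.mem_range.mp hj)
      _ = (∑ j ∈ Finset.range n, j) * Fintype.card Alp ^ (n - B) := by
          simp [Finset.sum_const, Finset.card_range, Finset.sum_mul]
  -- real arithmetic
  set a : ℝ := (Fintype.card Alp : ℝ) with ha
  have ha2 : (2:ℝ) ≤ a := by rw [ha]; exact_mod_cast hα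
  have hapos : (0:ℝ) < a := by linarith
  have hpB : (0:ℝ) < a ^ B := pow_pos hapos B
  have hpn : (0:ℝ) < a ^ n := pow_pos hapos n
  have hG2 : (∑ j ∈ Finset.range n, j) * 2 = n * (n - 1) := Finset.sum_range_id_mul_two n
  have hGR : ((∑ j ∈ Finset.range n, j : ℕ) : ℝ) = (n:ℝ) * ((n:ℝ) - 1) / 2 := by
    have h1 : (((∑ j ∈ Finset.range n, j) * 2 : ℕ) : ℝ) = ((n * (n-1) : ℕ) : ℝ) := by rw [hG2]
    rw [Nat.cast_mul, Nat.cast_mul, Nat.cast_sub (by omega : 1 ≤ n)] at h1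
    simp only [Nat.cast_ofNat, Nat.cast_one] at h1
    linarith
  have hBadR : (Bad.card : ℝ) ≤ (n:ℝ) * ((n:ℝ) - 1) / 2 * a ^ (n - B) := by
    have h1 : (Bad.card : ℝ) ≤ ((∑ j ∈ Finset.range n, j : ℕ) : ℝ) * a ^ (n - B) := by
      rw [ha]; exact_mod_cast hBadle
    rw [hGR] at h1; exact h1
  have hGoodR : (Good.card : ℝ) + (Bad.card : ℝ) = a ^ n := by
    rw [ha]; exact_mod_cast hsum
  have hsplit : a ^ (n - B) * a ^ B = a ^ n := by
    rw [← pow_add]; congr 1; omega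
  rw [le_div_iff₀ hpn]
  have hkey : (n:ℝ) * ((n:ℝ) - 1) / (2 * a ^ B) * a ^ n
      = (n:ℝ) * ((n:ℝ) - 1) / 2 * a ^ (n - B) := by
    rw [← hsplit]; field_simp
  nlinarith [hBadR, hGoodR, hkey]
end

section
/- For a uniformly random string s of length n over an alphabet of size α, and any two distinct indices 0 ≤ i < j < n and any B with 1 ≤ B ≤ n/2, the probability that the cyclic substrings s[i..i+B-1] and s[j..j+B-1] are equal is exactly α^{−B}. -/
open scoped Classical

def myPos (n : ℕ) [NeZero n] (t : ℕ) : Fin n :=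
  ⟨t % n, Nat.mod_lt _ (Nat.pos_of_ne_zero (NeZero.ne n))⟩

noncomputable def Tset (n : ℕ) [NeZero n] (j B : ℕ) : Finset (Fin n) :=
  (Finset.range B).image (fun k => myPos n (j + k))

noncomputable def myStep (n : ℕ) [NeZero n] (j B d : ℕ) (p : Fin n) : Fin n :=
  if p ∈ Tset n j B then myPos n (p.val + (n - d)) else p

lemma myStep_out {n : ℕ} [NeZero n] {j B d : ℕ} {p : Fin n} (hp : p ∉ Tset n j B) :
    myStep n j B d p = p := if_neg hp

lemma iter_notin (n : ℕ) [NeZero n] (j B d : ℕ) (hd : 0 < d) (hdn : d < n)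
    (hB1 : 1 ≤ B) (hB2 : 2 * B ≤ n) (p : Fin n) :
    (myStep n j B d)^[n] p ∉ Tset n j B := by
  by_contra hmem
  have hn0 : 0 < n := Nat.pos_of_ne_zero (NeZero.ne n)
  set g := n.gcd d with hgdef
  have hg0 : 0 < g := Nat.gcd_pos_of_pos_left _ hn0
  have hgn : g ∣ n := Nat.gcd_dvd_left _ _
  have hgd : g ∣ d := Nat.gcd_dvd_right _ _
  have hgnd : g ∣ (n - d) := Nat.dvd_sub hgn hgd
  set m := n / g with hmdef
  have hnm : g * m = n := Nat.mul_div_cancel' hgn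
  have hm2 : 2 ≤ m := by
    rcases Nat.lt_or_ge m 2 with h | h
    · interval_cases m
      · omega
      · have : g = n := by omega
        have : g ≤ d := Nat.le_of_dvd hd hgd
        omega
    · exact h
  have hmn : m ≤ n := by
    calc m ≤ g * m := Nat.le_mul_of_pos_left _ hg0
    _ = n := hnm
  -- all iterates up to n stay in T
  have hallT : ∀ t ≤ n, (myStep n j B d)^[t] p ∈ Tset n j B := by
    intro t ht
    by_contra h
    have h2 : (myStep n j B d)^[n] p = (myStep n j B d)^[n - t] ((myStep n j B d)^[t] p) := by
      rw [← Function.iterate_add_apply]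
      congr 1
      omega
    have : (myStep n j B d)^[n] p = (myStep n j B d)^[t] p := by
      rw [h2]
      exact Function.iterate_fixed (myStep_out h) _
    exact h (this ▸ hmem)
  -- value of iterates
  have hval : ∀ t ≤ n, ((myStep n j B d)^[t] p).val = (p.val + t * (n - d)) % n := by
    intro t ht
    induction t with
    | zero => simp [Nat.mod_eq_of_lt p.isLt]
    | succ t ih =>
      have ht' : t ≤ n := by omega
      rw [Function.iterate_succ_apply', myStep, if_pos (hallT t ht'), myPos]
      simp only [ih ht']
      rw [Nat.mod_add_mod]
      congr 1
      ring
  -- existence of k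
  have hK0 : ∀ t ≤ n, ∃ k < B, (p.val + t * (n - d)) % n = (j + k) % n := by
    intro t ht
    have := hallT t ht
    rw [Tset, Finset.mem_image] at this
    obtain ⟨k, hk, hk2⟩ := this
    rw [Finset.mem_range] at hk
    refine ⟨k, hk, ?_⟩
    have := congrArg Fin.val hk2
    simp [myPos] at this
    rw [← hval t ht, ← this]
  have hK' : ∀ t : ℕ, ∃ k : ℕ, t ≤ n → k < B ∧ (p.val + t * (n - d)) % n = (j + k) % n := by
    intro t
    by_cases ht : t ≤ n
    · obtain ⟨k, hk1, hk2⟩ := hK0 t ht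
      exact ⟨k, fun _ => ⟨hk1, hk2⟩⟩
    · exact ⟨0, fun h => absurd h ht⟩
  choose K hKs using hK'
  set S := (Finset.range B).filter (fun k => (j + k) % g = p.val % g) with hS
  have hmaps : ∀ t ∈ Finset.range m, K t ∈ S := by
    intro t htm
    rw [Finset.mem_range] at htm
    have ht : t ≤ n := le_trans (le_of_lt htm) hmn
    obtain ⟨hk1, hk2⟩ := hKs t ht
    rw [hS, Finset.mem_filter, Finset.mem_range]
    refine ⟨hk1, ?_⟩
    have h1 := congrArg (· % g) hk2
    rw [Nat.mod_mod_of_dvd _ hgn, Nat.mod_mod_of_dvd _ hgn] at h1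
    obtain ⟨c, hc⟩ := hgnd
    rw [hc] at h1
    rw [← h1]
    rw [show t * (g * c) = g * (t * c) by ring]
    rw [Nat.add_mul_mod_self_left]
  have hinj : Set.InjOn K (Finset.range m) := by
    have key : ∀ t1 t2, t1 ≤ t2 → t2 < m → K t1 = K t2 → t1 = t2 := by
      intro t1 t2 hle ht2 hKeq
      have h1 : t1 ≤ n := by omega
      have h2 : t2 ≤ n := by omega
      obtain ⟨_, e1⟩ := hKs t1 h1
      obtain ⟨_, e2⟩ := hKs t2 h2
      rw [hKeq] at e1
      have hmodeq : (p.val + t1 * (n - d)) ≡ (p.val + t2 * (n - d)) [MOD n] := by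
        unfold Nat.ModEq; rw [e1, e2]
      have hmodeq2 : t1 * (n - d) ≡ t2 * (n - d) [MOD n] :=
        Nat.ModEq.add_left_cancel' _ hmodeq
      have hdvd : n ∣ t2 * (n - d) - t1 * (n - d) :=
        (Nat.modEq_iff_dvd' (Nat.mul_le_mul_right _ hle)).mp hmodeq2
      have hsub : t2 * (n - d) - t1 * (n - d) = (t2 - t1) * (n - d) := by
        rw [Nat.sub_mul]
      rw [hsub] at hdvd
      set u := t2 - t1 with hu
      have hsum : u * (n - d) + u * d = u * n := by
        rw [← Nat.mul_add]
        congr 1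
        omega
      have hdvd2 : n ∣ u * d := by
        have h3 : n ∣ u * n := dvd_mul_left n u
        have : u * d = u * n - u * (n - d) := by omega
        rw [this]
        exact Nat.dvd_sub h3 hdvd
      -- divide by g
      set e := d / g with hedef
      have he : g * e = d := Nat.mul_div_cancel' hgd
      have hdvd3 : m ∣ u * e := by
        have : g * m ∣ g * (u * e) := by
          rw [hnm, show g * (u * e) = u * (g * e) by ring, he]
          exact hdvd2
        exact (mul_dvd_mul_iff_left (by omega : g ≠ 0)).mp this
      have hcop : Nat.Coprime m e := Nat.coprime_div_gcd_div_gcd hg0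
      have hdvdu : m ∣ u := (Nat.Coprime.dvd_of_dvd_mul_right hcop) hdvd3
      have hu0 : u = 0 := Nat.eq_zero_of_dvd_of_lt hdvdu (by omega)
      omega
    intro t1 h1 t2 h2 heq
    simp only [Finset.coe_range, Set.mem_Iio] at h1 h2
    rcases le_total t1 t2 with h | h
    · exact key t1 t2 h h2 heq
    · exact (key t2 t1 h h1 heq.symm).symm
  have hcard1 : m ≤ S.card := by
    have := Finset.card_le_card_of_injOn K hmaps hinj
    simpa using this
  have hcard2 : S.card ≤ (B - 1) / g + 1 := by
    have : S.card ≤ (Finset.range ((B - 1) / g + 1)).card := by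
      apply Finset.card_le_card_of_injOn (fun k => k / g)
      · intro k hk
        simp only [hS, Finset.coe_filter, Set.mem_setOf_eq, Finset.mem_range] at hk
        simp only [Finset.coe_range, Set.mem_Iio]
        have : k / g ≤ (B - 1) / g := Nat.div_le_div_right (by omega)
        omega
      · intro k1 h1 k2 h2 heq
        simp only [hS, Finset.coe_filter, Set.mem_setOf_eq, Finset.mem_range] at h1 h2
        have hm1 : (j + k1) % g = (j + k2) % g := by rw [h1.2, h2.2]
        have hm2 : k1 % g = k2 % g := by
          have : k1 ≡ k2 [MOD g] := Nat.ModEq.add_left_cancel' j hm1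
          exact this
        have heq' : k1 / g = k2 / g := heq
        calc k1 = g * (k1 / g) + k1 % g := (Nat.div_add_mod _ _).symm
        _ = g * (k2 / g) + k2 % g := by rw [heq', hm2]
        _ = k2 := Nat.div_add_mod _ _
    simpa using this
  have hfinal : n ≤ B - 1 + g := by
    have h1 : g * m ≤ g * ((B - 1) / g + 1) := Nat.mul_le_mul_left g (le_trans hcard1 hcard2)
    have h2 : g * ((B - 1) / g) ≤ B - 1 := Nat.mul_div_le _ _
    calc n = g * m := hnm.symm
    _ ≤ g * ((B - 1) / g + 1) := h1
    _ = g * ((B - 1) / g) + g := by ring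
    _ ≤ B - 1 + g := by omega
  have h2g : 2 * g ≤ n := by
    calc 2 * g = g * 2 := by ring
    _ ≤ g * m := Nat.mul_le_mul_left g hm2
    _ = n := hnm
  omega

lemma count_eq {Alp : Type*} [Fintype Alp] [DecidableEq Alp] {n B : ℕ} [NeZero n]
    (hB1 : 1 ≤ B) (hB2 : 2 * B ≤ n) (i j : ℕ) (hij : i < j) (hjn : j < n) :
    (Finset.univ.filter fun s : Fin n → Alp => substr s i B = substr s j B).card
      = Fintype.card Alp ^ (n - B) := by
  have hn0 : 0 < n := Nat.pos_of_ne_zero (NeZero.ne n)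
  set d := j - i with hddef
  have hd : 0 < d := by omega
  have hdn : d < n := by omega
  have hBn : B ≤ n := by omega
  -- event rewriting
  have hevent : ∀ s : Fin n → Alp, substr s i B = substr s j B ↔
      ∀ k : Fin B, s (myPos n (i + k)) = s (myPos n (j + k)) := by
    intro s
    exact List.ofFn_inj.trans funext_iff
  -- step sends bpos to apos
  have hstepT : ∀ k : Fin B, myStep n j B d (myPos n (j + k)) = myPos n (i + k) := by
    intro k
    have hmem : myPos n (j + k) ∈ Tset n j B := by
      rw [Tset, Finset.mem_image]
      exact ⟨k, Finset.mem_range.mpr k.isLt, rfl⟩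
    rw [myStep, if_pos hmem]
    apply Fin.ext
    show ((j + ↑k) % n + (n - d)) % n = (i + ↑k) % n
    rw [Nat.mod_add_mod]
    rw [show j + ↑k + (n - d) = i + ↑k + n by omega]
    rw [Nat.add_mod_right]
  have hρ : ∀ p : Fin n, (myStep n j B d)^[n] p ∉ Tset n j B :=
    iter_notin n j B d hd hdn hB1 hB2
  have hρ_id : ∀ p : Fin n, p ∉ Tset n j B → (myStep n j B d)^[n] p = p :=
    fun p hp => Function.iterate_fixed (myStep_out hp) _
  have hρ_step : ∀ p : Fin n, (myStep n j B d)^[n] (myStep n j B d p) = (myStep n j B d)^[n] p := by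
    intro p
    rw [← Function.iterate_succ_apply, Function.iterate_succ_apply']
    exact myStep_out (hρ p)
  -- fixed under step for event strings
  have hfix : ∀ s : Fin n → Alp, (∀ k : Fin B, s (myPos n (i + k)) = s (myPos n (j + k))) →
      ∀ p : Fin n, s ((myStep n j B d)^[n] p) = s p := by
    intro s hs p
    have hstep1 : ∀ q : Fin n, s (myStep n j B d q) = s q := by
      intro q
      by_cases hq : q ∈ Tset n j B
      · rw [Tset, Finset.mem_image] at hq
        obtain ⟨k, hk, hk2⟩ := hq
        rw [Finset.mem_range] at hk
        rw [← hk2, hstepT ⟨k, hk⟩]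
        exact hs ⟨k, hk⟩
      · rw [myStep_out hq]
    have : ∀ t : ℕ, s ((myStep n j B d)^[t] p) = s p := by
      intro t
      induction t with
      | zero => rfl
      | succ t ih => rw [Function.iterate_succ_apply', hstep1, ih]
    exact this n
  -- cardinality of T
  have hTcard : (Tset n j B).card = B := by
    rw [Tset]
    rw [Finset.card_image_of_injOn]
    · exact Finset.card_range B
    · intro k1 h1 k2 h2 heq
      simp only [Finset.coe_range, Set.mem_Iio] at h1 h2
      have := congrArg Fin.val heq
      simp only [myPos] at this
      have h3 : (j + k1) ≡ (j + k2) [MOD n] := this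
      have h4 : k1 ≡ k2 [MOD n] := Nat.ModEq.add_left_cancel' j h3
      rw [Nat.ModEq, Nat.mod_eq_of_lt (by omega), Nat.mod_eq_of_lt (by omega)] at h4
      exact h4
  set E := Finset.univ.filter fun s : Fin n → Alp => substr s i B = substr s j B with hE
  -- the equivalence
  have hmemE : ∀ s : Fin n → Alp, s ∈ E ↔
      ∀ k : Fin B, s (myPos n (i + k)) = s (myPos n (j + k)) := by
    intro s
    rw [hE, Finset.mem_filter]
    simp [hevent s]
  let e : {s : Fin n → Alp // s ∈ E} ≃ ({p : Fin n // p ∉ Tset n j B} → Alp) :=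
    { toFun := fun s q => s.1 q.1
      invFun := fun f => ⟨fun p => f ⟨(myStep n j B d)^[n] p, hρ p⟩, by
        rw [hmemE]
        intro k
        have h1 : (myStep n j B d)^[n] (myPos n (i + k)) = (myStep n j B d)^[n] (myPos n (j + k)) := by
          rw [← hstepT k, hρ_step]
        simp only [h1]⟩
      left_inv := by
        intro s
        apply Subtype.ext
        funext p
        exact hfix s.1 ((hmemE s.1).mp s.2) p
      right_inv := by
        intro f
        funext q
        have : (⟨(myStep n j B d)^[n] q.1, hρ q.1⟩ : {p : Fin n // p ∉ Tset n j B}) = q :=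
          Subtype.ext (hρ_id q.1 q.2)
        simp only [this] }
  have hcard : E.card = Fintype.card Alp ^ (n - B) := by
    rw [← Fintype.card_coe]
    rw [Fintype.card_congr e]
    rw [Fintype.card_fun]
    congr 1
    have h1 := Fintype.card_subtype_compl (p := fun p : Fin n => p ∈ Tset n j B)
    have h2 : Fintype.card {x : Fin n // x ∈ Tset n j B} = B := by
      simp [hTcard, Fintype.card_coe]
    rw [h1, Fintype.card_fin, h2]
  exact hcard


theorem stmt5 {Alp : Type*} [Fintype Alp] [DecidableEq Alp] {n B : ℕ} [NeZero n]
    (hα : 2 ≤ Fintype.card Alp) (hB1 : 1 ≤ B) (hB2 : 2 * B ≤ n)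
    (i j : ℕ) (hij : i < j) (hjn : j < n) :
    ((Finset.univ.filter fun s : Fin n → Alp => substr s i B = substr s j B).card : ℝ) /
        (Fintype.card Alp : ℝ) ^ n = ((Fintype.card Alp : ℝ) ^ B)⁻¹ := by
  rw [count_eq hB1 hB2 i j hij hjn]
  have hα0 : (0 : ℝ) < (Fintype.card Alp : ℝ) := by
    have : 0 < Fintype.card Alp := by omega
    exact_mod_cast this
  push_cast
  rw [div_eq_iff (by positivity), inv_mul_eq_div, eq_div_iff (by positivity)]
  rw [← pow_add]
  congr 1
  omega
end

section
/- For a uniformly random binary string s of length n ≥ 2, the probability that the string sensitivity C(s) is at most ⌈3·log₂ n⌉ is at least 1 − 1/n. -/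
open scoped Classical

lemma key_mod (n i t : ℕ) (hn : 0 < n) : (t + (i + (n - i % n))) % n = t % n := by
  have h3 : i % n + n * (i / n) = i := Nat.mod_add_div i n
  have h2 : i % n < n := Nat.mod_lt _ hn
  have h4 : i + (n - i % n) = n + n * (i / n) := by omega
  rw [h4, ← add_assoc, Nat.add_mul_mod_self_left, Nat.add_mod_right]
lemma orbit_escape {n B d w i : ℕ} (hn : 0 < n) (hd : 0 < d) (hdn : d < n) (hB : 2 * B ≤ n)
    (h : ∀ k, ∃ t, t < B ∧ (w + k * d) % n = (i + t) % n) : False := by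
  set g : ℕ → ℕ := fun k => (w + k * d + (n - i % n)) % n with hg
  have hgB : ∀ k, g k < B := by
    intro k
    obtain ⟨t, htB, he⟩ := h k
    have htn : t < n := lt_of_lt_of_le htB (by omega)
    have e : g k = t := by
      have e1 : g k = ((w + k * d) % n + (n - i % n)) % n := by
        simp only [hg, Nat.mod_add_mod]
      rw [e1, he, Nat.mod_add_mod]
      have e2 : i + t + (n - i % n) = t + (i + (n - i % n)) := by ring
      rw [e2, key_mod n i t hn, Nat.mod_eq_of_lt htn]
    omega
  have hper : ∀ k, g k = g (k % n) := by
    intro k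
    have hk : k = k % n + n * (k / n) := (Nat.mod_add_div k n).symm
    have e : w + k * d + (n - i % n) = (w + (k % n) * d + (n - i % n)) + (k / n * d) * n := by
      conv_lhs => rw [hk]
      ring
    simp only [hg]
    rw [e, Nat.add_mul_mod_self_right]
  have hne : ((Finset.range n).image g).Nonempty :=
    ⟨g 0, Finset.mem_image.mpr ⟨0, Finset.mem_range.mpr hn, rfl⟩⟩
  set M := ((Finset.range n).image g).max' hne with hM
  obtain ⟨k₀, hk₀n, hk₀⟩ := Finset.mem_image.mp (((Finset.range n).image g).max'_mem hne)
  have hle : ∀ k, g k ≤ M := by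
    intro k
    rw [hper k]
    exact Finset.le_max' _ _ (Finset.mem_image.mpr ⟨k % n, Finset.mem_range.mpr (Nat.mod_lt _ hn), rfl⟩)
  have hMM : g k₀ = M := by rw [hM]; exact hk₀
  have hMB : M < B := by rw [← hMM]; exact hgB k₀
  have e1 : g (k₀ + 1) = (M + d) % n := by
    simp only [hg] at hMM ⊢
    have e : w + (k₀ + 1) * d + (n - i % n) = (w + k₀ * d + (n - i % n)) + d := by ring
    rw [e, ← Nat.mod_add_mod]
    rw [show (w + k₀ * d + (n - i % n)) % n = M from hMM]
  have hnd : n ≤ M + d := by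
    by_contra hlt
    push_neg at hlt
    have h1 := hle (k₀ + 1)
    rw [e1, Nat.mod_eq_of_lt hlt] at h1
    omega
  have e2 : (n - 1) * d % n = n - d := by
    have hsplit : (n - 1) * d = (n - d) + (d - 1) * n := by
      zify [show 1 ≤ n from hn, show d ≤ n from hdn.le, show 1 ≤ d from hd]
      ring
    rw [hsplit, Nat.add_mul_mod_self_right, Nat.mod_eq_of_lt (by omega)]
  have e3 : g (k₀ + (n - 1)) = M + (n - d) := by
    simp only [hg] at hMM ⊢
    have e : w + (k₀ + (n - 1)) * d + (n - i % n) = (w + k₀ * d + (n - i % n)) + (n - 1) * d := by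
      ring
    rw [e, ← Nat.mod_add_mod]
    rw [show (w + k₀ * d + (n - i % n)) % n = M from hMM, ← Nat.add_mod_mod, e2,
      Nat.mod_eq_of_lt (by omega)]
  have := hle (k₀ + (n - 1))
  rw [e3] at this
  omega
lemma fin_congr {n : ℕ} (s : Fin n → Bool) {a b : ℕ} (ha : a < n) (hb : b < n) (h : a = b) :
    s ⟨a, ha⟩ = s ⟨b, hb⟩ := by subst h; rfl
lemma flip_eq {n : ℕ} [NeZero n] {B i j : ℕ} (hB2 : 2 * B ≤ n) (hij : i < j) (hjn : j < n)
    {s s' : Fin n → Bool}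
    (hs : substr s i B = substr s j B) (hs' : substr s' i B = substr s' j B)
    (hagree : ∀ x : Fin n, (∀ t, t < B → (x : ℕ) ≠ (i + t) % n) → s x = s' x) :
    s = s' := by
  have hn : 0 < n := Nat.pos_of_ne_zero (NeZero.ne n)
  by_contra hne
  obtain ⟨x₀, hx₀⟩ := Function.ne_iff.mp hne
  set d := j - i with hd
  have hd0 : 0 < d := by omega
  have hdn : d < n := by omega
  have hsc : ∀ t : Fin B, s ⟨(i + ↑t) % n, Nat.mod_lt _ hn⟩ = s ⟨(j + ↑t) % n, Nat.mod_lt _ hn⟩ :=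
    fun t => congrFun (List.ofFn_inj.mp hs) t
  have hsc' : ∀ t : Fin B, s' ⟨(i + ↑t) % n, Nat.mod_lt _ hn⟩ = s' ⟨(j + ↑t) % n, Nat.mod_lt _ hn⟩ :=
    fun t => congrFun (List.ofFn_inj.mp hs') t
  have claim : ∀ k, s ⟨(↑x₀ + k * d) % n, Nat.mod_lt _ hn⟩ ≠ s' ⟨(↑x₀ + k * d) % n, Nat.mod_lt _ hn⟩ := by
    intro k
    induction k with
    | zero =>
      have e : (⟨(↑x₀ + 0 * d) % n, Nat.mod_lt _ hn⟩ : Fin n) = x₀ := by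
        ext
        simp [Nat.mod_eq_of_lt x₀.isLt]
      rw [e]
      exact hx₀
    | succ k ih =>
      obtain ⟨t, htB, hty⟩ : ∃ t, t < B ∧ (↑x₀ + k * d) % n = (i + t) % n := by
        by_contra hno
        push_neg at hno
        exact ih (hagree _ (fun t ht he => hno t ht he))
      have hnext : (j + t) % n = (↑x₀ + (k + 1) * d) % n := by
        have h1 : j + t = (i + t) + d := by omega
        rw [h1, ← Nat.mod_add_mod, ← hty, Nat.mod_add_mod]
        congr 1
        ring
      have es : s ⟨(↑x₀ + (k + 1) * d) % n, Nat.mod_lt _ hn⟩ = s ⟨(↑x₀ + k * d) % n, Nat.mod_lt _ hn⟩ := by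
        rw [fin_congr s _ (Nat.mod_lt _ hn) hnext.symm, ← hsc ⟨t, htB⟩,
          fin_congr s _ (Nat.mod_lt _ hn) hty]
      have es' : s' ⟨(↑x₀ + (k + 1) * d) % n, Nat.mod_lt _ hn⟩ = s' ⟨(↑x₀ + k * d) % n, Nat.mod_lt _ hn⟩ := by
        rw [fin_congr s' _ (Nat.mod_lt _ hn) hnext.symm, ← hsc' ⟨t, htB⟩,
          fin_congr s' _ (Nat.mod_lt _ hn) hty]
      rw [es, es']
      exact ih
  have claimEx : ∀ k, ∃ t, t < B ∧ ((x₀ : ℕ) + k * d) % n = (i + t) % n := by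
    intro k
    by_contra hno
    push_neg at hno
    exact claim k (hagree _ (fun t ht he => hno t ht he))
  exact orbit_escape hn hd0 hdn hB2 claimEx
lemma card_pair {n : ℕ} [NeZero n] {B i j : ℕ} (hB2 : 2 * B ≤ n) (hij : i < j) (hjn : j < n) :
    (Finset.univ.filter fun s : Fin n → Bool => substr s i B = substr s j B).card ≤ 2 ^ (n - B) := by
  have hn : 0 < n := Nat.pos_of_ne_zero (NeZero.ne n)
  have hBn : B ≤ n := by omega
  set W : Finset (Fin n) := (Finset.range B).image (fun t => ⟨(i + t) % n, Nat.mod_lt _ hn⟩)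
    with hW
  have hWcard : W.card = B := by
    rw [hW, Finset.card_image_of_injOn, Finset.card_range]
    intro t₁ h₁ t₂ h₂ he
    simp only [Finset.coe_range, Set.mem_Iio] at h₁ h₂
    have hv : (i + t₁) % n = (i + t₂) % n := by
      simpa [Fin.mk.injEq] using he
    have hm : t₁ % n = t₂ % n := Nat.ModEq.add_left_cancel' i hv
    rw [Nat.mod_eq_of_lt (by omega), Nat.mod_eq_of_lt (by omega)] at hm
    exact hm
  have hcardT : (Finset.univ : Finset ({x // x ∈ Wᶜ} → Bool)).card = 2 ^ (n - B) := by
    simp [Fintype.card_fun, Finset.card_compl, hWcard]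
  calc (Finset.univ.filter fun s : Fin n → Bool => substr s i B = substr s j B).card
      ≤ (Finset.univ : Finset ({x // x ∈ Wᶜ} → Bool)).card := by
        apply Finset.card_le_card_of_injOn (fun s => fun x => s x.1)
          (fun a _ => Finset.mem_univ _)
        intro s hsmem s' hsmem' he
        simp only [Finset.coe_filter, Set.mem_setOf_eq, Finset.mem_univ, true_and] at hsmem hsmem'
        apply flip_eq hB2 hij hjn hsmem hsmem'
        intro x hx
        have hxW : x ∈ Wᶜ := by
          rw [Finset.mem_compl, hW]
          simp only [Finset.mem_image, Finset.mem_range, not_exists, not_and]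
          intro t ht hxe
          exact hx t ht (by rw [← hxe])
        exact congrFun he ⟨x, hxW⟩
    _ = 2 ^ (n - B) := hcardT

theorem stmt6 {n : ℕ} [NeZero n] (hn : 2 ≤ n) (hB : 2 * Nat.clog 2 (n ^ 3) ≤ n) :
    (1 : ℝ) - 1 / (n : ℝ) ≤
      ((Finset.univ.filter fun s : Fin n → Bool =>
          ∀ i j : ℕ, i < j → j < n →
            substr s i (Nat.clog 2 (n ^ 3)) ≠ substr s j (Nat.clog 2 (n ^ 3))).card : ℝ) /
        (2 : ℝ) ^ n := by
  set B := Nat.clog 2 (n ^ 3) with hBdef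
  have hBn : B ≤ n := by omega
  have hpow : n ^ 3 ≤ 2 ^ B := Nat.le_pow_clog (by norm_num) _
  set G := Finset.univ.filter fun s : Fin n → Bool =>
      ∀ i j : ℕ, i < j → j < n → substr s i B ≠ substr s j B with hG
  set D := Finset.univ.filter fun s : Fin n → Bool =>
      ¬ ∀ i j : ℕ, i < j → j < n → substr s i B ≠ substr s j B with hD
  have hcu : (Finset.univ : Finset (Fin n → Bool)).card = 2 ^ n := by
    simp [Finset.card_univ]
  have hGD : G.card + D.card = 2 ^ n := by
    rw [hG, hD, Finset.card_filter_add_card_filter_not, hcu]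
  have hDsub : D ⊆ (Finset.range n ×ˢ Finset.range n).biUnion
      (fun p => Finset.univ.filter fun s : Fin n → Bool =>
        p.1 < p.2 ∧ substr s p.1 B = substr s p.2 B) := by
    intro s hs
    rw [hD, Finset.mem_filter] at hs
    push_neg at hs
    obtain ⟨-, i, j, hij, hjn, heq⟩ := hs
    rw [Finset.mem_biUnion]
    exact ⟨(i, j), Finset.mem_product.mpr ⟨Finset.mem_range.mpr (by omega),
      Finset.mem_range.mpr hjn⟩, Finset.mem_filter.mpr ⟨Finset.mem_univ _, hij, heq⟩⟩
  have hDcard : D.card ≤ n * n * 2 ^ (n - B) := by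
    calc D.card ≤ ((Finset.range n ×ˢ Finset.range n).biUnion
        (fun p => Finset.univ.filter fun s : Fin n → Bool =>
          p.1 < p.2 ∧ substr s p.1 B = substr s p.2 B)).card := Finset.card_le_card hDsub
      _ ≤ ∑ p ∈ Finset.range n ×ˢ Finset.range n,
          (Finset.univ.filter fun s : Fin n → Bool =>
            p.1 < p.2 ∧ substr s p.1 B = substr s p.2 B).card := Finset.card_biUnion_le
      _ ≤ (Finset.range n ×ˢ Finset.range n).card * 2 ^ (n - B) := by
          rw [← smul_eq_mul]
          apply Finset.sum_le_card_nsmul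
          intro p hp
          rw [Finset.mem_product, Finset.mem_range, Finset.mem_range] at hp
          by_cases hlt : p.1 < p.2
          · calc (Finset.univ.filter fun s : Fin n → Bool =>
                p.1 < p.2 ∧ substr s p.1 B = substr s p.2 B).card
                ≤ (Finset.univ.filter fun s : Fin n → Bool =>
                  substr s p.1 B = substr s p.2 B).card := by
                  apply Finset.card_le_card
                  intro s hs
                  rw [Finset.mem_filter] at hs ⊢
                  exact ⟨hs.1, hs.2.2⟩
              _ ≤ 2 ^ (n - B) := card_pair hB hlt hp.2
          · have : (Finset.univ.filter fun s : Fin n → Bool =>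
                p.1 < p.2 ∧ substr s p.1 B = substr s p.2 B) = ∅ := by
              apply Finset.filter_eq_empty_iff.mpr
              intro s _
              tauto
            rw [this]
            simp
      _ = n * n * 2 ^ (n - B) := by
          rw [Finset.card_product, Finset.card_range]
  have hkey : D.card * n ≤ 2 ^ n := by
    calc D.card * n ≤ n * n * 2 ^ (n - B) * n := Nat.mul_le_mul_right n hDcard
      _ = n ^ 3 * 2 ^ (n - B) := by ring
      _ ≤ 2 ^ B * 2 ^ (n - B) := Nat.mul_le_mul_right _ hpow
      _ = 2 ^ n := by rw [← pow_add]; congr 1; omega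
  -- real arithmetic
  have hn0 : (0 : ℝ) < n := by positivity
  have h2n : (0 : ℝ) < (2 : ℝ) ^ n := by positivity
  have hGcast : (G.card : ℝ) = 2 ^ n - D.card := by
    have : (G.card : ℝ) + D.card = 2 ^ n := by exact_mod_cast congrArg (Nat.cast (R := ℝ)) hGD
    linarith
  have hkeyR : (D.card : ℝ) * n ≤ 2 ^ n := by exact_mod_cast hkey
  rw [le_div_iff₀ h2n, hGcast]
  have hD2 : (D.card : ℝ) ≤ 2 ^ n / n := (le_div_iff₀ hn0).mpr hkeyR
  have : ((1 : ℝ) - 1 / n) * 2 ^ n = 2 ^ n - 2 ^ n / n := by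
    field_simp
  rw [this]
  linarith
end

section
/- For the all-ones binary string x = 1^n, the block sensitivity of LMSR₀ at x is at least ⌊n/2⌋. -/
open scoped Classical

lemma rotStr_lt_of_head {n : ℕ} [NeZero n] (s t : Fin n → Bool) (k k' : ℕ)
    (h : cyc s k 0 = false) (h' : cyc t k' 0 = true) : rotStr s k < rotStr t k' := by
  obtain ⟨m, rfl⟩ := Nat.exists_eq_succ_of_ne_zero (NeZero.ne n)
  unfold rotStr substr
  rw [List.ofFn_succ, List.ofFn_succ]
  have h0 : ((0 : Fin (m+1)) : ℕ) = 0 := rfl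
  simp only [h0, h, h']
  exact List.Lex.rel (by simp)

lemma flipS_empty {n : ℕ} (x : Fin n → Bool) : flipS x ∅ = x := by
  funext i; simp [flipS]

lemma LMSR_const_true {n : ℕ} [NeZero n] : LMSR (fun _ : Fin n => true) = 0 := by
  have hmem : IsMinRot (fun _ : Fin n => true) 0 := by
    refine ⟨Nat.pos_of_ne_zero (NeZero.ne n), fun k' _ => ?_⟩
    have : ∀ k : ℕ, rotStr (fun _ : Fin n => true) k = List.ofFn (fun _ : Fin n => true) := by
      intro k; unfold rotStr substr cyc; rfl
    rw [this 0, this k']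
  exact Nat.eq_zero_of_le_zero (Nat.sInf_le hmem)

lemma cyc_zero {n : ℕ} [NeZero n] (s : Fin n → Bool) (k : ℕ) (hk : k < n) :
    cyc s k 0 = s ⟨k, hk⟩ := by
  unfold cyc
  congr 1
  exact Fin.ext (by simp [Nat.mod_eq_of_lt hk])

lemma LMSR_single_false {n : ℕ} [NeZero n] (y : Fin n → Bool) (p : Fin n)
    (hp : y p = false) (hy : ∀ i : Fin n, i ≠ p → y i = true) : LMSR y = (p : ℕ) := by
  have hhead : cyc y (p : ℕ) 0 = false := by rw [cyc_zero y p p.isLt]; simpa using hp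
  have hlt : ∀ k : ℕ, k < n → k ≠ (p : ℕ) → rotStr y (p : ℕ) < rotStr y k := by
    intro k hk hne
    refine rotStr_lt_of_head y y _ _ hhead ?_
    rw [cyc_zero y k hk]
    exact hy _ (fun h => hne (congrArg Fin.val h))
  have hmem : IsMinRot y (p : ℕ) := by
    refine ⟨p.isLt, fun k' hk' => ?_⟩
    by_cases hke : k' = (p : ℕ)
    · subst hke; exact le_refl _
    · exact le_of_lt (hlt k' hk' hke)
  refine le_antisymm (Nat.sInf_le hmem) (le_csInf ⟨_, hmem⟩ ?_)
  intro b hb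
  by_contra hlt'
  push_neg at hlt'
  have hbne : b ≠ (p : ℕ) := Nat.ne_of_lt hlt'
  have h1 : rotStr y b ≤ rotStr y (p : ℕ) := hb.2 _ p.isLt
  have h2 : rotStr y (p : ℕ) < rotStr y b := hlt b hb.1 hbne
  exact absurd h1 (not_le_of_gt h2)

lemma hasBS_le {n : ℕ} (f : (Fin n → Bool) → ℕ) (x : Fin n → Bool) (m : ℕ)
    (h : HasBS f x m) : m ≤ n := by
  obtain ⟨S, hdisj, hne⟩ := h
  have hnonempty : ∀ i, (S i).Nonempty := by
    intro i
    rcases (S i).eq_empty_or_nonempty with he | hne'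
    · exact absurd (by rw [he, flipS_empty]) (hne i)
    · exact hne'
  have hinj : Function.Injective (fun i => (hnonempty i).choose) := by
    intro i j hij
    by_contra hne'
    have h1 := (hnonempty i).choose_spec
    have h2 := (hnonempty j).choose_spec
    have hij2 : (hnonempty i).choose = (hnonempty j).choose := hij
    rw [hij2] at h1
    exact (Finset.disjoint_left.mp (hdisj i j hne')) h1 h2
  simpa using Fintype.card_le_of_injective _ hinj

theorem stmt7 {n : ℕ} [NeZero n] :
    n / 2 ≤ bs LMSR0 (fun _ : Fin n => true) := by
  have hx : LMSR0 (fun _ : Fin n => true) = 0 := by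
    unfold LMSR0; rw [LMSR_const_true]
  have hbs : HasBS LMSR0 (fun _ : Fin n => true) (n / 2) := by
    have hlt : ∀ i : Fin (n / 2), 2 * (i : ℕ) + 1 < n := by
      intro i; have := i.isLt; omega
    refine ⟨fun i => {⟨2 * (i : ℕ) + 1, hlt i⟩}, ?_, ?_⟩
    · intro i j hij
      rw [Finset.disjoint_singleton]
      intro h
      exact hij (Fin.ext (by have := congrArg Fin.val h; simp at this; omega))
    · intro i
      set p : Fin n := ⟨2 * (i : ℕ) + 1, hlt i⟩
      have h1 : LMSR (flipS (fun _ : Fin n => true) {p}) = (p : ℕ) := by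
        refine LMSR_single_false _ p ?_ ?_
        · simp [flipS]
        · intro j hj; simp [flipS, hj]
      rw [hx]
      unfold LMSR0
      rw [h1]
      simp [p]
  have hbdd : BddAbove {m | HasBS LMSR0 (fun _ : Fin n => true) m} :=
    ⟨n, fun m hm => hasBS_le _ _ m hm⟩
  exact le_csSup hbdd hbs
end

section
/- Let p be an aperiodic string of length m (its period exceeds m/2) with deterministic sample (δ; i₀, …, i_{l−1}), and let t be a string of length n ≥ m. If an index j ∈ [0, n−m] satisfies t[i_k + j − δ] = p[i_k − δ] for every k ∈ [l], then for every j' ∈ [0, n−m] with j − δ ≤ j' < j − δ + ⌊m/2⌋ and j' ≠ j, the substring t[j'..j'+m−1] is not equal to p. -/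
open scoped Classical

theorem stmt8 {α : Type*} {m n : ℕ} [NeZero m] [NeZero n] (p : Fin m → α) (t : Fin n → α)
    (hmn : m ≤ n) (haper : m < 2 * period p)
    (δ l : ℕ) (ip : Fin l → ℤ)
    (hδ : δ < m / 2)
    (hck : ∀ k, 0 ≤ ip k - δ ∧ ip k - δ < m)
    (hds : ∀ j : ℕ, j < m / 2 → j ≠ δ →
      ∃ k, 0 ≤ ip k - j ∧ ip k - j < m ∧ getZ p (ip k - j) ≠ getZ p (ip k - δ))
    (j : ℕ) (hj : j + m ≤ n)
    (hrange : ∀ k, 0 ≤ ip k + j - δ ∧ ip k + j - δ < n)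
    (hmatch : ∀ k, getZ t (ip k + j - δ) = getZ p (ip k - δ))
    (j' : ℕ) (hj' : j' + m ≤ n)
    (hlo : (j : ℤ) - δ ≤ j') (hhi : (j' : ℤ) < (j : ℤ) - δ + (m / 2 : ℕ))
    (hne : j' ≠ j) :
    ¬ ∀ i : Fin m, t ⟨j' + i.val, by have := i.isLt; omega⟩ = p i := by
  intro hfull
  set d : ℕ := j' + δ - j with hdd
  have hdz : (d : ℤ) = (j' : ℤ) + δ - j := by omega
  have hd2 : d < m / 2 := by omega
  have hdδ : d ≠ δ := by omega
  obtain ⟨k, h1, h2, h3⟩ := hds d hd2 hdδ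
  apply h3
  have hm := hmatch k
  have hck1 := (hck k).1
  have hck2 := (hck k).2
  have hr1 := (hrange k).1
  have hr2 := (hrange k).2
  unfold getZ at hm ⊢
  have e1 : (ip k - d).toNat % m = (ip k - d).toNat := Nat.mod_eq_of_lt (by omega)
  have e2 : (ip k - δ).toNat % m = (ip k - δ).toNat := Nat.mod_eq_of_lt (by omega)
  have e3 : (ip k + j - δ).toNat % n = (ip k + j - δ).toNat := Nat.mod_eq_of_lt (by omega)
  simp only [e1, e2, e3] at hm ⊢
  have hfi : (ip k - d).toNat < m := by omega
  have key := hfull ⟨(ip k - d).toNat, hfi⟩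
  rw [← key, ← hm]
  exact congrArg t (Fin.ext (by simp only []; omega))
end

section
/- Let p be a periodic string of length m with period d ≤ m/2, with deterministic sample (δ; i₀, …, i_{l−1}), and let t be a string of length n ≥ m. If an index j ∈ [0, n−m] satisfies t[i_k + j − δ] = p[i_k − δ] for every k ∈ [l], then for every j' ∈ [0, n−m] with j − δ ≤ j' < j − δ + ⌊m/2⌋ and j' ≢ j (mod d), the substring t[j'..j'+m−1] is not equal to p. -/
open scoped Classical

theorem stmt9 {α : Type*} {m n d : ℕ} [NeZero m] [NeZero n] (p : Fin m → α) (t : Fin n → α)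
    (hmn : m ≤ n) (hper : period p = d) (hdm : 2 * d ≤ m)
    (δ l : ℕ) (ip : Fin l → ℤ)
    (hδ : δ < m / 2)
    (hck : ∀ k, 0 ≤ ip k - δ ∧ ip k - δ < m)
    (hds : ∀ j : ℕ, j < m / 2 → ¬ j ≡ δ [MOD d] →
      ∃ k, 0 ≤ ip k - j ∧ ip k - j < m ∧ getZ p (ip k - j) ≠ getZ p (ip k - δ))
    (j : ℕ) (hj : j + m ≤ n)
    (hrange : ∀ k, 0 ≤ ip k + j - δ ∧ ip k + j - δ < n)
    (hmatch : ∀ k, getZ t (ip k + j - δ) = getZ p (ip k - δ))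
    (j' : ℕ) (hj' : j' + m ≤ n)
    (hlo : (j : ℤ) - δ ≤ j') (hhi : (j' : ℤ) < (j : ℤ) - δ + (m / 2 : ℕ))
    (hne : ¬ j' ≡ j [MOD d]) :
    ¬ ∀ i : Fin m, t ⟨j' + i.val, by have := i.isLt; omega⟩ = p i := by
  intro H
  set j0 : ℕ := j' + δ - j with hj0
  have hj0' : (j0 : ℤ) = (j' : ℤ) - j + δ := by simp [hj0]; omega
  have hj0lt : j0 < m / 2 := by omega
  have hj0ne : ¬ j0 ≡ δ [MOD d] := by
    intro h
    apply hne
    have h2 := Nat.ModEq.add_right j h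
    have e : j0 + j = j' + δ := by omega
    rw [e] at h2
    have h3 : j' + δ ≡ j + δ [MOD d] := by simpa [Nat.add_comm] using h2
    exact h3.add_right_cancel' δ
  obtain ⟨k, h1, h2, h3⟩ := hds j0 hj0lt hj0ne
  apply h3
  have hck' := hck k
  have hrange' := hrange k
  have hm := hmatch k
  have ha : (ip k - j0).toNat < m := by omega
  rw [← hm]
  have hbn : (ip k + j - δ).toNat < n := by omega
  have e3 : (ip k + j - δ).toNat = j' + (ip k - j0).toNat := by omega
  have hH := H ⟨(ip k - j0).toNat, ha⟩
  simp only [getZ] at hH ⊢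
  convert hH.symm using 2
  · exact Fin.ext (Nat.mod_eq_of_lt ha)
  · exact Fin.ext (by simp only [Nat.mod_eq_of_lt hbn]; exact e3)
end

section
/- Every string s of length n has a deterministic sample (δ; i₀, …, i_{l−1}) with at most ⌊log₂ n⌋ checkpoints, i.e., l ≤ ⌊log₂ n⌋. -/
open scoped Classical

section Aux

variable {α : Type*} {n : ℕ} [NeZero n]

def gg (s : Fin n → α) (i : ℕ) : α :=
  s ⟨i % n, Nat.mod_lt _ (Nat.pos_of_ne_zero (NeZero.ne n))⟩

lemma gg_eq (s : Fin n → α) {i : ℕ} (h : i < n) : gg s i = s ⟨i, h⟩ := by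
  unfold gg; congr 1; exact Fin.ext (Nat.mod_eq_of_lt h)

lemma isPer_n (s : Fin n → α) : IsPer s n :=
  ⟨Nat.pos_of_ne_zero (NeZero.ne n), fun i h => by omega⟩

lemma per_mem (s : Fin n → α) : IsPer s (period s) := by
  have h : {d | IsPer s d}.Nonempty := ⟨n, isPer_n s⟩
  exact Nat.sInf_mem h

lemma per_pos (s : Fin n → α) : 0 < period s := (per_mem s).1

lemma isper_g {s : Fin n → α} {e : ℕ} (he : IsPer s e) :
    ∀ i, i + e < n → gg s i = gg s (i + e) := by
  intro i h
  rw [gg_eq s (by omega), gg_eq s h]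
  exact he.2 i h

lemma g_isper {s : Fin n → α} {e : ℕ} (he0 : 0 < e)
    (h : ∀ i, i + e < n → gg s i = gg s (i + e)) : IsPer s e := by
  refine ⟨he0, fun i hi => ?_⟩
  have := h i hi
  rwa [gg_eq s (by omega), gg_eq s hi] at this

lemma chain_aux (s : Fin n → α) : ∀ (k a : ℕ), a + k * period s < n →
    gg s a = gg s (a + k * period s) := by
  intro k
  induction k with
  | zero => simp
  | succ k ih =>
    intro a h
    have hd := per_pos s
    have h1 : a + period s < n := by nlinarith [Nat.succ_mul k (period s)]
    have := isper_g (per_mem s) a h1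
    rw [this]
    have h2 : a + period s + k * period s = a + (k+1) * period s := by ring
    rw [← h2]
    exact ih (a + period s) (by omega)

lemma chain2 (s : Fin n → α) {a b : ℕ} (ha : a < n) (hb : b < n)
    (hab : a ≡ b [MOD period s]) : gg s a = gg s b := by
  rcases le_total a b with h | h
  · obtain ⟨k, hk⟩ := (Nat.modEq_iff_dvd' h).mp hab
    have hb' : b = a + k * period s := by rw [Nat.mul_comm]; omega
    rw [hb']; exact chain_aux s k a (by omega)
  · obtain ⟨k, hk⟩ := (Nat.modEq_iff_dvd' h).mp hab.symm
    have ha' : a = b + k * period s := by rw [Nat.mul_comm]; omega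
    rw [ha']; exact (chain_aux s k b (by omega)).symm

lemma dvd_of_per (s : Fin n → α) {e : ℕ} (he : 0 < e) (h2 : 2 * e ≤ n)
    (hp : ∀ t, t + e < n → gg s t = gg s (t + e)) : period s ∣ e := by
  set d := period s with hd
  have hde : d ≤ e := Nat.sInf_le (g_isper he hp)
  have hdpos : 0 < d := per_pos s
  by_contra hnd
  have hr : 0 < e % d := Nat.pos_of_ne_zero (fun h0 => hnd (Nat.dvd_of_mod_eq_zero h0))
  set r := e % d with hrdef
  have hrd : r < d := Nat.mod_lt _ hdpos
  have hper : IsPer s r := by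
    refine g_isper hr ?_
    intro t ht
    set t0 := t % d with ht0
    have ht0d : t0 < d := Nat.mod_lt _ hdpos
    have htt0 : t0 ≡ t [MOD d] := (Nat.mod_modEq t d)
    have e1 : gg s t = gg s t0 := chain2 s (by omega) (by omega) htt0.symm
    have e2 : gg s (t + r) = gg s (t0 + r) :=
      chain2 s (by omega) (by omega) (Nat.ModEq.add_right r htt0.symm)
    have e3 : gg s t0 = gg s (t0 + e) := hp t0 (by omega)
    have e4 : gg s (t0 + r) = gg s (t0 + e) := by
      refine chain2 s (by omega) (by omega) ?_
      have : r ≡ e [MOD d] := (Nat.mod_modEq e d)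
      exact Nat.ModEq.add_left t0 this
    rw [e1, e2, e4, e3]
  have : d ≤ r := Nat.sInf_le hper
  omega

lemma lemmaB (s : Fin n → α) (hn : 2 ≤ n) (A : Finset ℕ)
    (hA : ∀ j ∈ A, j < n / 2) {m M : ℕ}
    (hmA : m ∈ A) (hMA : M ∈ A) (hm : ∀ j ∈ A, m ≤ j) (hM : ∀ j ∈ A, j ≤ M)
    {a b : ℕ} (ha : a ∈ A) (hb : b ∈ A)
    (hab : ¬ a ≡ b [MOD period s]) :
    ∃ i, M ≤ i ∧ i < n + m ∧
      ∃ x ∈ A, ∃ y ∈ A, gg s (i - x) ≠ gg s (i - y) := by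
  set d := period s with hd
  have hMlt : M < n / 2 := hA M hMA
  have hmM : m ≤ M := hm M hMA
  have hma : m ≤ a := hm a ha
  have hmb : m ≤ b := hm b hb
  have haM : a ≤ M := hM a ha
  have hbM : b ≤ M := hM b hb
  by_contra hcon
  push_neg at hcon
  have H : ∀ i, M ≤ i → i < n + m → ∀ x ∈ A, ∀ y ∈ A, gg s (i - x) = gg s (i - y) := by
    intro i h1 h2 x hx y hy
    by_contra hne'
    exact hne' ((hcon i h1 h2 x hx y hy))
  have hdpos : 0 < d := per_pos s
  by_cases hcase : m ≡ M [MOD d]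
  · -- case: m ≡ M, use the noncongruent pair a b (wlog a<b)
    have core : ∀ x y, x ∈ A → y ∈ A → x < y → ¬ x ≡ y [MOD d] → False := by
      intro x y hx hy hxy hnxy
      have hmx : m ≤ x := hm x hx
      have hyM : y ≤ M := hM y hy
      have hepos : 0 < y - x := by omega
      have hmMne : m < M := by omega
      have hdMm : d ∣ M - m := (Nat.modEq_iff_dvd' hmM).mp hcase
      have hdle : d ≤ M - m := Nat.le_of_dvd (by omega) hdMm
      -- show e := y - x is a global period
      have hper : ∀ t, t + (y - x) < n → gg s t = gg s (t + (y - x)) := by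
        intro t ht
        set w := M - y with hw
        have hwd : w + 1 ≤ d * (w + 1) := Nat.le_mul_of_pos_left _ hdpos
        have hrbound : (t + d * (w + 1) - w) % d < d := Nat.mod_lt _ hdpos
        set t' := w + ((t + d * (w + 1) - w) % d) with ht'
        have htt' : t ≡ t' [MOD d] := by
          have h1 : t' ≡ w + (t + d * (w + 1) - w) [MOD d] :=
            Nat.ModEq.add_left w (Nat.mod_modEq _ d)
          have h2 : w + (t + d * (w + 1) - w) = t + d * (w + 1) := by omega
          rw [h2] at h1
          have h3 : t ≡ t + d * (w + 1) [MOD d] :=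
            (Nat.modEq_iff_dvd' (by omega)).mpr ⟨w + 1, by omega⟩
          exact h3.trans h1.symm
        have e1 : gg s t = gg s t' := chain2 s (by omega) (by omega) htt'
        have e2 : gg s (t + (y - x)) = gg s (t' + (y - x)) :=
          chain2 s (by omega) (by omega) (Nat.ModEq.add_right (y - x) htt')
        have e3 : gg s t' = gg s (t' + (y - x)) := by
          have := H (t' + y) (by omega) (by omega) y hy x hx
          have hxy1 : t' + y - y = t' := by omega
          have hxy2 : t' + y - x = t' + (y - x) := by omega
          rwa [hxy1, hxy2] at this
        rw [e1, e2, ← e3]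
      have hdvd : d ∣ y - x := dvd_of_per s hepos (by omega) hper
      exact hnxy ((Nat.modEq_iff_dvd' (by omega)).mpr hdvd)
    rcases Nat.lt_or_ge a b with h | h
    · exact core a b ha hb h hab
    · have hba : b < a := by
        rcases Nat.lt_or_ge b a with h' | h'
        · exact h'
        · exfalso
          have : a = b := by omega
          exact hab (this ▸ Nat.ModEq.refl a)
      exact core b a hb ha hba (fun h' => hab h'.symm)
  · -- case: ¬ m ≡ M : then e := M - m is a global period, contradiction
    have hmMne : m < M := by
      rcases Nat.lt_or_ge m M with h | h
      · exact h
      · exfalso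
        have : m = M := by omega
        exact hcase (this ▸ Nat.ModEq.refl m)
    have hepos : 0 < M - m := by omega
    have hper : ∀ t, t + (M - m) < n → gg s t = gg s (t + (M - m)) := by
      intro t ht
      have := H (t + M) (by omega) (by omega) M hMA m hmA
      have h1 : t + M - M = t := by omega
      have h2 : t + M - m = t + (M - m) := by omega
      rwa [h1, h2] at this
    have hdvd : d ∣ M - m := dvd_of_per s hepos (by omega) hper
    exact hcase ((Nat.modEq_iff_dvd' (by omega)).mpr hdvd)

lemma getZ_eq (s : Fin n → α) (z : ℤ) : getZ s z = gg s z.toNat := rfl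

lemma mainRec (s : Fin n → α) (hn : 2 ≤ n) :
    ∀ (N : ℕ) (A : Finset ℕ), A.card ≤ N → A.Nonempty → (∀ j ∈ A, j < n / 2) →
    ∃ δ ∈ A, ∃ l, ∃ ip : Fin l → ℕ,
      2 ^ l ≤ A.card ∧ (∀ k, δ ≤ ip k ∧ ip k < n + δ) ∧
      (∀ j ∈ A, ¬ j ≡ δ [MOD period s] →
        ∃ k, j ≤ ip k ∧ ip k < n + j ∧ gg s (ip k - j) ≠ gg s (ip k - δ)) := by
  intro N
  induction N with
  | zero =>
    intro A hc hne _
    exact absurd (Finset.card_pos.mpr hne) (by omega)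
  | succ N ih =>
    intro A hc hne hA
    by_cases hcong : ∀ a ∈ A, ∀ b ∈ A, a ≡ b [MOD period s]
    · obtain ⟨δ, hδ⟩ := hne
      refine ⟨δ, hδ, 0, Fin.elim0, ?_, fun k => k.elim0,
        fun j hj hcontra => absurd (hcong j hj δ hδ) hcontra⟩
      simpa using Finset.card_pos.mpr ⟨δ, hδ⟩
    · push_neg at hcong
      obtain ⟨a, ha, b, hb, hab⟩ := hcong
      obtain ⟨i, hiM, him, x, hx, y, hy, hxy⟩ :=
        lemmaB s hn A hA (A.min'_mem hne) (A.max'_mem hne)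
          (fun j hj => A.min'_le j hj) (fun j hj => A.le_max' j hj) ha hb hab
      have core : ∀ x y, x ∈ A → y ∈ A → gg s (i - x) ≠ gg s (i - y) →
          (A.filter (fun j => gg s (i - j) = gg s (i - x))).card ≤
            (A.filter (fun j => gg s (i - j) = gg s (i - y))).card →
          ∃ δ ∈ A, ∃ l, ∃ ip : Fin l → ℕ,
            2 ^ l ≤ A.card ∧ (∀ k, δ ≤ ip k ∧ ip k < n + δ) ∧
            (∀ j ∈ A, ¬ j ≡ δ [MOD period s] →
              ∃ k, j ≤ ip k ∧ ip k < n + j ∧ gg s (ip k - j) ≠ gg s (ip k - δ)) := by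
        clear hx hy hxy x y
        intro x y hx hy hxy hcard
        set B := A.filter (fun j => gg s (i - j) = gg s (i - x)) with hB
        set C := A.filter (fun j => gg s (i - j) = gg s (i - y)) with hC
        have hBsub : B ⊆ A := Finset.filter_subset _ _
        have hxB : x ∈ B := Finset.mem_filter.mpr ⟨hx, rfl⟩
        have hyB : y ∉ B := fun h => hxy ((Finset.mem_filter.mp h).2).symm
        have hdisj : Disjoint B C := by
          rw [Finset.disjoint_left]
          intro j hjB hjC
          have h1 := (Finset.mem_filter.mp hjB).2
          have h2 := (Finset.mem_filter.mp hjC).2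
          exact hxy (h1.symm.trans h2)
        have hunion : (B ∪ C).card ≤ A.card :=
          Finset.card_le_card (Finset.union_subset hBsub (Finset.filter_subset _ _))
        have hcards : B.card + C.card = (B ∪ C).card :=
          (Finset.card_union_of_disjoint hdisj).symm
        have h2card : 2 * B.card ≤ A.card := by omega
        have hBlt : B.card < A.card :=
          Finset.card_lt_card ⟨hBsub, fun hsub => hyB (hsub hy)⟩
        obtain ⟨δ, hδB, l, ip, hpow, hrange, hdist⟩ :=
          ih B (by omega) ⟨x, hxB⟩ (fun j hj => hA j (hBsub hj))
        have hδA : δ ∈ A := hBsub hδB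
        refine ⟨δ, hδA, l + 1, Fin.cons i ip, ?_, ?_, ?_⟩
        · have h1 : 2 ^ (l + 1) = 2 * 2 ^ l := by ring
          omega
        · intro k
          refine Fin.cases ?_ ?_ k
          · simp only [Fin.cons_zero]
            have h1 : δ ≤ A.max' hne := A.le_max' δ hδA
            have h2 : A.min' hne ≤ δ := A.min'_le δ hδA
            omega
          · intro k'
            simp only [Fin.cons_succ]
            exact hrange k'
        · intro j hj hmod
          by_cases hjB : j ∈ B
          · obtain ⟨k, h1, h2, h3⟩ := hdist j hjB hmod
            exact ⟨k.succ, by simpa [Fin.cons_succ] using ⟨h1, h2, h3⟩⟩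
          · refine ⟨0, ?_, ?_, ?_⟩
            · simp only [Fin.cons_zero]
              have := A.le_max' j hj
              omega
            · simp only [Fin.cons_zero]
              have := A.min'_le j hj
              omega
            · simp only [Fin.cons_zero]
              have h1 : gg s (i - δ) = gg s (i - x) := (Finset.mem_filter.mp hδB).2
              have h2 : ¬ gg s (i - j) = gg s (i - x) := by
                intro h
                exact hjB (Finset.mem_filter.mpr ⟨hj, h⟩)
              rw [h1]
              exact h2
      rcases le_total ((A.filter (fun j => gg s (i - j) = gg s (i - x))).card)
          ((A.filter (fun j => gg s (i - j) = gg s (i - y))).card) with h | h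
      · exact core x y hx hy hxy h
      · exact core y x hy hx (Ne.symm hxy) h

end Aux

theorem stmt10 {α : Type*} {n : ℕ} [NeZero n] (s : Fin n → α) (hn : 2 ≤ n) :
    ∃ (δ l : ℕ) (ip : Fin l → ℤ),
      l ≤ Nat.log 2 n ∧ δ < n / 2 ∧
      (∀ k, 0 ≤ ip k - δ ∧ ip k - δ < n) ∧
      (∀ j : ℕ, j < n / 2 → ¬ j ≡ δ [MOD period s] →
        ∃ k, 0 ≤ ip k - j ∧ ip k - j < n ∧ getZ s (ip k - j) ≠ getZ s (ip k - δ)) := by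
  have hhalf : 1 ≤ n / 2 := by omega
  have hne : (Finset.range (n / 2)).Nonempty := ⟨0, Finset.mem_range.mpr (by omega)⟩
  obtain ⟨δ, hδ, l, ip, hpow, hrange, hdist⟩ :=
    mainRec s hn (Finset.range (n / 2)).card (Finset.range (n / 2)) le_rfl hne
      (fun j hj => Finset.mem_range.mp hj)
  rw [Finset.card_range] at hpow
  refine ⟨δ, l, fun k => (ip k : ℤ), ?_, Finset.mem_range.mp hδ, ?_, ?_⟩
  · have h1 : 2 ^ l ≤ n := le_trans hpow (Nat.div_le_self n 2)
    exact (Nat.le_log_iff_pow_le (by norm_num) (by omega)).mpr h1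
  · intro k
    have := hrange k
    constructor <;> [push_cast; push_cast] <;> omega
  · intro j hj hmod
    obtain ⟨k, h1, h2, h3⟩ := hdist j (Finset.mem_range.mpr hj) hmod
    have hδr := hrange k
    refine ⟨k, by push_cast; omega, by push_cast; omega, ?_⟩
    rw [getZ_eq, getZ_eq]
    have e1 : ((ip k : ℤ) - j).toNat = ip k - j := by omega
    have e2 : ((ip k : ℤ) - δ).toNat = ip k - δ := by omega
    rw [e1, e2]
    exact h3
end

section
/- If the string sensitivity C(s) of a string s of length n is finite and equals l, then the lexicographically minimal rotation offset LMSR(s) equals the unique index i ∈ [0, n) minimizing the cyclic substring s[i..i+l−1] of length l; in particular, if the minimal length-l cyclic substring of s is strictly smaller than the second minimal one, its starting index equals LMSR(s). -/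
open scoped Classical

lemma list_lt_iff_lex {α : Type*} [LinearOrder α] (a b : List α) : a < b ↔ List.Lex (· < ·) a b := Iff.rfl

lemma lex_cons_iff' {α : Type*} [LinearOrder α] (a b : α) (l₁ l₂ : List α) :
    List.Lex (· < ·) (a :: l₁) (b :: l₂) ↔ a < b ∨ a = b ∧ List.Lex (· < ·) l₁ l₂ := by
  constructor
  · intro h
    cases h with
    | cons h => exact Or.inr ⟨rfl, h⟩
    | rel h => exact Or.inl h
  · rintro (h | ⟨rfl, h⟩)
    · exact List.Lex.rel h
    · exact List.Lex.cons h

lemma ofFn_lt_iff {α : Type*} [LinearOrder α] : ∀ (L : ℕ) (f g : ℕ → α),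
    (List.ofFn (fun t : Fin L => f t) < List.ofFn (fun t : Fin L => g t)) ↔
      ∃ t < L, (∀ u < t, f u = g u) ∧ f t < g t := by
  intro L
  induction L with
  | zero => intro f g; simp [List.ofFn_zero, list_lt_iff_lex]
  | succ L ih =>
    intro f g
    rw [list_lt_iff_lex, List.ofFn_succ, List.ofFn_succ, lex_cons_iff']
    simp only [← list_lt_iff_lex]
    constructor
    · rintro (h | ⟨he, h⟩)
      · exact ⟨0, Nat.succ_pos _, by omega, h⟩
      · obtain ⟨t, ht, hu, hlt⟩ := (ih (fun u => f (u+1)) (fun u => g (u+1))).1 h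
        exact ⟨t + 1, by omega, by
          intro u hu'
          cases u with
          | zero => exact he
          | succ u => exact hu u (by omega), hlt⟩
    · rintro ⟨t, ht, hu, hlt⟩
      cases t with
      | zero => exact Or.inl hlt
      | succ t =>
        refine Or.inr ⟨hu 0 (Nat.succ_pos _), ?_⟩
        exact (ih (fun u => f (u+1)) (fun u => g (u+1))).2
          ⟨t, by omega, fun u h => hu (u+1) (by omega), hlt⟩

lemma substr_lt_iff {α : Type*} [LinearOrder α] {n : ℕ} [NeZero n] (s : Fin n → α)
    (i j B : ℕ) : substr s i B < substr s j B ↔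
      ∃ t < B, (∀ u < t, cyc s i u = cyc s j u) ∧ cyc s i t < cyc s j t := by
  rw [substr, substr]
  exact ofFn_lt_iff B (cyc s i) (cyc s j)

lemma cyc_sub_n {α : Type*} {n : ℕ} [NeZero n] (s : Fin n → α) (i t : ℕ) (ht : n ≤ t) :
    cyc s i (t - n) = cyc s i t := by
  unfold cyc
  congr 1
  apply Fin.ext
  simp only
  have h1 : i + (t - n) = (i + t) - n := by omega
  rw [h1, ← Nat.mod_eq_sub_mod (by omega)]

lemma substr_lt_mono {α : Type*} [LinearOrder α] {n : ℕ} [NeZero n] (s : Fin n → α)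
    {i j l : ℕ} (h : substr s i l < substr s j l) : rotStr s i < rotStr s j := by
  have hn : 0 < n := Nat.pos_of_ne_zero (NeZero.ne n)
  obtain ⟨t, htl, _, hlt⟩ := (substr_lt_iff s i j l).1 h
  have hne : ∃ t, cyc s i t ≠ cyc s j t := ⟨t, ne_of_lt hlt⟩
  have ht0 : cyc s i (Nat.find hne) ≠ cyc s j (Nat.find hne) := Nat.find_spec hne
  set t0 := Nat.find hne with ht0def
  have hmin : ∀ u < t0, cyc s i u = cyc s j u := fun u hu => not_not.1 (Nat.find_min hne hu)
  have ht0t : t0 ≤ t := Nat.find_min' hne (ne_of_lt hlt)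
  have ht0n : t0 < n := by
    by_contra hge
    push_neg at hge
    have h1 : cyc s i (t0 - n) = cyc s i t0 := cyc_sub_n s i t0 hge
    have h2 : cyc s j (t0 - n) = cyc s j t0 := cyc_sub_n s j t0 hge
    have := hmin (t0 - n) (by omega)
    rw [h1, h2] at this
    exact ht0 this
  have ht0lt : cyc s i t0 < cyc s j t0 := by
    rcases lt_trichotomy (cyc s i t0) (cyc s j t0) with h' | h' | h'
    · exact h'
    · exact absurd h' ht0
    · exfalso
      have : substr s j l < substr s i l :=
        (substr_lt_iff s j i l).2 ⟨t0, by omega, fun u hu => (hmin u hu).symm, h'⟩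
      exact lt_asymm h this
  exact (substr_lt_iff s i j n).2 ⟨t0, ht0n, hmin, ht0lt⟩

lemma exists_minrot {α : Type*} [LinearOrder α] {n : ℕ} [NeZero n] (s : Fin n → α) :
    ∃ k, IsMinRot s k := by
  have hn : 0 < n := Nat.pos_of_ne_zero (NeZero.ne n)
  obtain ⟨k, hk, hmin⟩ := Finset.exists_min_image (Finset.range n) (rotStr s)
    ⟨0, Finset.mem_range.2 hn⟩
  exact ⟨k, Finset.mem_range.1 hk, fun k' hk' => hmin k' (Finset.mem_range.2 hk')⟩

theorem stmt14 {α : Type*} [LinearOrder α] {n : ℕ} [NeZero n] (s : Fin n → α) (l : ℕ)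
    (hl : 0 < l) (hC : Csens s = l)
    (hdist : ∀ i j : ℕ, i < j → j < n → substr s i l ≠ substr s j l) :
    (LMSR s < n ∧ ∀ j < n, j ≠ LMSR s → substr s (LMSR s) l < substr s j l) ∧
    (∀ i < n, (∀ j < n, j ≠ i → substr s i l < substr s j l) → i = LMSR s) := by
  have hn : 0 < n := Nat.pos_of_ne_zero (NeZero.ne n)
  have hmem : IsMinRot s (LMSR s) := Nat.sInf_mem (exists_minrot s)
  have key : ∀ j < n, j ≠ LMSR s → substr s (LMSR s) l < substr s j l := by
    intro j hj hne
    have hd : substr s (LMSR s) l ≠ substr s j l := by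
      rcases lt_trichotomy j (LMSR s) with h' | h' | h'
      · exact fun he => hdist j (LMSR s) h' hmem.1 he.symm
      · exact absurd h' hne
      · exact hdist (LMSR s) j h' hj
    rcases lt_trichotomy (substr s (LMSR s) l) (substr s j l) with h' | h' | h'
    · exact h'
    · exact absurd h' hd
    · exact absurd (hmem.2 j hj) (not_le_of_gt (substr_lt_mono s h'))
  refine ⟨⟨hmem.1, key⟩, ?_⟩
  intro i hi h
  by_contra hne
  have h1 := substr_lt_mono s (h (LMSR s) hmem.1 (fun he => hne he.symm))
  exact absurd (hmem.2 i hi) (not_le_of_gt h1)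
end

section
/- Let x ∈ {0,1}^n with LMSR(x) = 0 and string sensitivity C(x) = B with B ≤ n/5. Write x = y₁y₂⋯y_k y_{k+1} where |y_i| = B for 1 ≤ i ≤ k, k = ⌊n/B⌋. Then y₁ is strictly lexicographically smaller than each of y₂, …, y_k, and y₁y₂ > 0^{2B} (the all-zeros string of length 2B). -/
open scoped Classical

lemma lex_append_lt {u v : List Bool} (a b : List Bool)
    (h : u < v) (hl : u.length = v.length) : u ++ a < v ++ b := by
  have h' : List.Lex (· < ·) u v := h
  show List.Lex (· < ·) (u ++ a) (v ++ b)
  clear h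
  induction h' with
  | nil => simp at hl
  | @rel u v c d hcd => exact List.Lex.rel hcd
  | @cons c u v h ih =>
      exact List.Lex.cons (ih (by simpa using hl))

lemma substr_split {n : ℕ} [NeZero n] (s : Fin n → Bool) (k a b : ℕ) :
    substr s k (a + b) = substr s k a ++ List.ofFn (fun t : Fin b => cyc s k (a + t)) := by
  unfold substr
  rw [List.ofFn_add]
  congr 1

lemma repl_lt {L : List Bool} (h : L ≠ List.replicate L.length false) :
    List.replicate L.length false < L := by
  induction L with
  | nil => simp at h
  | cons c l ih =>
      show List.Lex (· < ·) _ _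
      rw [List.length_cons, List.replicate_succ]
      cases c
      · have : l ≠ List.replicate l.length false := by
          intro he
          exact h (by rw [List.length_cons, List.replicate_succ, ← he])
        exact List.Lex.cons (ih this)
      · exact List.Lex.rel (by decide)

theorem stmt15 {n B : ℕ} [NeZero n] (x : Fin n → Bool)
    (hL : LMSR x = 0) (hC : Csens x = B) (hB : 0 < B) (h5 : 5 * B ≤ n) :
    (∀ i : ℕ, 2 ≤ i → i ≤ n / B → substr x 0 B < substr x ((i - 1) * B) B) ∧
      List.replicate (2 * B) false < substr x 0 B ++ substr x B B := by
  -- basic facts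
  have hn : 0 < n := Nat.pos_of_ne_zero (NeZero.ne n)
  -- all length-B cyclic substrings are distinct
  have hCns : {l | 0 < l ∧ ∀ i j : ℕ, i < j → j < n → substr x i l ≠ substr x j l}.Nonempty := by
    by_contra h
    rw [Set.not_nonempty_iff_eq_empty] at h
    rw [Csens, h, Nat.sInf_empty] at hC
    omega
  have hdist := Nat.sInf_mem hCns
  rw [show sInf {l | 0 < l ∧ ∀ i j : ℕ, i < j → j < n → substr x i l ≠ substr x j l} = Csens x from rfl, hC] at hdist
  have hdist' : ∀ i j : ℕ, i < j → j < n → substr x i B ≠ substr x j B := hdist.2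
  -- IsMinRot x 0
  have hMns : {k | IsMinRot x k}.Nonempty := by
    obtain ⟨k, hk, hmin⟩ := Finset.exists_min_image (Finset.range n) (rotStr x)
      ⟨0, Finset.mem_range.mpr hn⟩
    exact ⟨k, Finset.mem_range.mp hk, fun k' hk' => hmin k' (Finset.mem_range.mpr hk')⟩
  have hmin0 : IsMinRot x 0 := by
    have := Nat.sInf_mem hMns
    rwa [show sInf {k | IsMinRot x k} = LMSR x from rfl, hL] at this
  -- key: substr x 0 B ≤ substr x j B for j < n
  have hle : ∀ j : ℕ, j < n → substr x 0 B ≤ substr x j B := by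
    intro j hj
    by_contra h
    push_neg at h
    have hlen : (substr x j B).length = (substr x 0 B).length := by simp [substr]
    have hdec : ∀ k : ℕ, rotStr x k = substr x k B ++
        List.ofFn (fun t : Fin (n - B) => cyc x k (B + t)) := by
      intro k
      have hnn : n = B + (n - B) := by omega
      rw [rotStr, congrArg (substr x k) hnn, substr_split]
    have : rotStr x j < rotStr x 0 := by
      rw [hdec 0, hdec j]
      exact lex_append_lt _ _ h hlen
    exact absurd (hmin0.2 j hj) (not_le_of_gt this)
  constructor
  · intro i h2 hk
    set j := (i - 1) * B with hj
    have hjn : j < n := by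
      have h1 : i - 1 < n / B := by omega
      have : (i - 1) * B < (n / B) * B := by
        exact (Nat.mul_lt_mul_right hB).mpr h1
      have h2 := Nat.div_mul_le_self n B
      omega
    have hj0 : 0 < j := by
      have : 1 ≤ i - 1 := by omega
      exact Nat.mul_pos (by omega) hB
    exact lt_of_le_of_ne (hle j hjn) (hdist' 0 j hj0 hjn)
  · have hsplit : substr x 0 B ++ substr x B B = substr x 0 (B + B) := by
      rw [substr_split]
      congr 1
      unfold substr cyc
      simp [Nat.add_comm]
    have hBn : B < n := by omega
    have hne : substr x 0 B ++ substr x B B ≠ List.replicate (2 * B) false := by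
      intro h
      have h1 : substr x 0 B = List.replicate B false ∧ substr x B B = List.replicate B false := by
        have hrep : List.replicate (2 * B) false =
            List.replicate B false ++ List.replicate B false := by
          rw [← List.replicate_add]; congr 1; omega
        rw [hrep] at h
        have hl1 : (substr x 0 B).length = (List.replicate B false).length := by
          simp [substr]
        exact ⟨(List.append_inj h hl1).1, (List.append_inj h hl1).2⟩
      exact hdist' 0 B hB hBn (h1.1.trans h1.2.symm)
    have hlen : (substr x 0 B ++ substr x B B).length = 2 * B := by
      simp [substr]; omega
    have := repl_lt (L := substr x 0 B ++ substr x B B) (by rw [hlen]; exact hne)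
    rwa [hlen] at this
end

section
/- Let p be a string of length m with period d ≤ m/2, and let j_l ≤ j_r be two positions in a text t where p occurs, with j_r − j_l < ⌊m/4⌋. Then j_r ≡ j_l (mod d), and every occurrence j of p in t with j_l ≤ j ≤ j_r satisfies j ≡ j_l (mod d). -/
open scoped Classical

def Pw {α : Type*} {m : ℕ} (p : Fin m → α) (e : ℕ) : Prop :=
  ∀ i : ℕ, ∀ h : i + e < m, p ⟨i, by omega⟩ = p ⟨i + e, h⟩

lemma pcast {α : Type*} {m : ℕ} (p : Fin m → α) {a b : ℕ} (ha : a < m) (hb : b < m)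
    (h : a = b) : p ⟨a, ha⟩ = p ⟨b, hb⟩ := by subst h; rfl

lemma fw {α : Type*} {m : ℕ} (p : Fin m → α) :
    ∀ n s d, d ≤ n → 0 < s → s ≤ d → s + d ≤ m → Pw p s → Pw p d →
      Pw p (Nat.gcd s d) := by
  intro n
  induction n with
  | zero => intro s d h hs hsd; omega
  | succ n ih =>
    intro s d hn hs hsd hm Ps Pd
    rcases eq_or_lt_of_le hsd with h | h
    · subst h; rwa [Nat.gcd_self]
    · have Pds : Pw p (d - s) := by
        intro i hi
        rcases le_or_gt s i with hc | hc
        · have h1 : (i - s) + d < m := by omega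
          have h2 : (i - s) + s < m := by omega
          calc p ⟨i, by omega⟩ = p ⟨(i - s) + s, h2⟩ := pcast p _ _ (by omega)
            _ = p ⟨i - s, by omega⟩ := (Ps (i - s) h2).symm
            _ = p ⟨(i - s) + d, h1⟩ := Pd (i - s) h1
            _ = p ⟨i + (d - s), hi⟩ := pcast p _ _ (by omega)
        · have h1 : i + d < m := by omega
          have h2 : (i + d - s) + s < m := by omega
          calc p ⟨i, by omega⟩ = p ⟨i + d, h1⟩ := Pd i h1
            _ = p ⟨(i + d - s) + s, h2⟩ := pcast p _ _ (by omega)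
            _ = p ⟨i + d - s, by omega⟩ := (Ps (i + d - s) h2).symm
            _ = p ⟨i + (d - s), hi⟩ := pcast p _ _ (by omega)
      have hg : Nat.gcd s (d - s) = Nat.gcd s d := by
        rw [Nat.gcd_comm s (d-s), Nat.gcd_sub_self_left (by omega), Nat.gcd_comm]
      rw [← hg]
      rcases le_or_gt s (d - s) with hc | hc
      · exact ih s (d - s) (by omega) hs hc (by omega) Ps Pds
      · rw [Nat.gcd_comm]
        exact ih (d - s) s (by omega) (by omega) (by omega) (by omega) Pds Ps

theorem stmt17 {α : Type*} {nt m d : ℕ} (t : Fin nt → α) (p : Fin m → α)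
    (hper : period p = d) (hdm : 2 * d ≤ m)
    (jl jr : ℕ) (hlr : jl ≤ jr) (hdist : jr - jl < m / 4)
    (hlm : jl + m ≤ nt) (hrm : jr + m ≤ nt)
    (hoccl : ∀ i : Fin m, t ⟨jl + i.val, by have := i.isLt; omega⟩ = p i)
    (hoccr : ∀ i : Fin m, t ⟨jr + i.val, by have := i.isLt; omega⟩ = p i) :
    jr ≡ jl [MOD d] ∧
      ∀ j : ℕ, ∀ _hjl : jl ≤ j, ∀ _hjr : j ≤ jr,
        (∀ i : Fin m, t ⟨j + i.val, by have := i.isLt; omega⟩ = p i) →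
        j ≡ jl [MOD d] := by

  have main : ∀ j : ℕ, ∀ _hjl : jl ≤ j, ∀ _hjr : j ≤ jr,
      (∀ i : Fin m, t ⟨j + i.val, by have := i.isLt; omega⟩ = p i) →
      j ≡ jl [MOD d] := by
    intro j hjl hjr hocc
    set s := j - jl with hsdef
    rcases Nat.eq_zero_or_pos s with hs0 | hs0
    · have : j = jl := by omega
      simp [this, Nat.ModEq.refl]
    · have hsm : s < m / 4 := by omega
      have hm0 : 0 < m := by omega
      -- d is a genuine period
      have hne : {e | IsPer p e}.Nonempty := ⟨m, hm0, fun i h => by omega⟩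
      have hdper : IsPer p d := by
        rw [← hper]; exact Nat.sInf_mem hne
      have hd0 : 0 < d := hdper.1
      -- s is a (weak) period of p
      have Ps : Pw p s := by
        intro i hi
        have h1 : j + i < nt := by omega
        calc p ⟨i, by omega⟩
            = t ⟨j + i, h1⟩ := (hocc ⟨i, by omega⟩).symm
          _ = t ⟨jl + (i + s), by omega⟩ := pcast t _ _ (by omega)
          _ = p ⟨i + s, hi⟩ := hoccl ⟨i + s, hi⟩
      have Pd : Pw p d := fun i h => hdper.2 i h
      have hsum : s + d ≤ m := by omega
      have Pg : Pw p (Nat.gcd s d) := by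
        rcases le_or_gt s d with hc | hc
        · exact fw p d s d le_rfl hs0 hc hsum Ps Pd
        · rw [Nat.gcd_comm]
          exact fw p s d s le_rfl hd0 (le_of_lt hc) (by omega) Pd Ps
      have hgper : IsPer p (Nat.gcd s d) := ⟨Nat.gcd_pos_of_pos_left _ hs0, fun i h => Pg i h⟩
      have hdle : d ≤ Nat.gcd s d := by
        have h : period p ≤ Nat.gcd s d := Nat.sInf_le hgper
        rwa [hper] at h
      have hgd : Nat.gcd s d = d :=
        le_antisymm (Nat.le_of_dvd hd0 (Nat.gcd_dvd_right s d)) hdle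
      have hdvd : d ∣ s := hgd ▸ Nat.gcd_dvd_left s d
      exact ((Nat.modEq_iff_dvd' hjl).mpr hdvd).symm
  exact ⟨main jr hlr le_rfl hoccr, fun j h1 h2 h3 => main j h1 h2 h3⟩
end

section
/- For binary strings x of length n, flipping bits so that the cyclic substring 0^{2B} appears starting at position L+1 (for an even offset L, 0 ≤ L ≤ n − 2B − 1) in a string x whose original minimal rotation starts at 0 with prefix containing no 2B consecutive zeros yields LMSR(x') = L+1 for the modified string x'; in particular LMSR(x') is odd. -/
open scoped Classical

/-- Auxiliary: cyclic access by a single natural index. -/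
def V {n : ℕ} [NeZero n] (s : Fin n → Bool) (i : ℕ) : Bool := cyc s i 0

lemma V_eq {n : ℕ} [NeZero n] (s : Fin n → Bool) (i : ℕ) :
    V s i = s ⟨i % n, Nat.mod_lt _ (Nat.pos_of_ne_zero (NeZero.ne n))⟩ := rfl

lemma V_cyc {n : ℕ} [NeZero n] (s : Fin n → Bool) (k t : ℕ) :
    cyc s k t = V s (k + t) := rfl

lemma V_add_n {n : ℕ} [NeZero n] (s : Fin n → Bool) (i : ℕ) :
    V s (i + n) = V s i := by
  rw [V_eq, V_eq]
  exact congrArg s (Fin.ext (by simp [Nat.add_mod_right]))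

lemma V_val {n : ℕ} [NeZero n] (s : Fin n → Bool) (i : ℕ) (h : i < n) :
    V s i = s ⟨i, h⟩ := by
  rw [V_eq]
  exact congrArg s (Fin.ext (by simp [Nat.mod_eq_of_lt h]))

lemma lex_aux {α : Type*} [LinearOrder α] : ∀ (m : ℕ) (a b : List α),
    (hma : m < a.length) → (hmb : m < b.length) →
    (∀ i, i < m → ∀ (h1 : i < a.length) (h2 : i < b.length), a[i] = b[i]) →
    a[m] < b[m] → List.Lex (· < ·) a b := by
  intro m
  induction m with
  | zero =>
    intro a b hma hmb _ hlt
    match a, b with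
    | x :: as, y :: bs => exact List.Lex.rel (by simpa using hlt)
  | succ m ih =>
    intro a b hma hmb hagree hlt
    match a, b with
    | x :: as, y :: bs =>
      have hxy : x = y := by exact hagree 0 (Nat.succ_pos m) (by simp) (by simp)
      subst hxy
      refine List.Lex.cons (ih as bs (by simpa using hma) (by simpa using hmb) ?_ (by simpa using hlt))
      intro i hi h1 h2
      exact hagree (i+1) (by omega) (by simpa using Nat.succ_lt_succ h1)
        (by simpa using Nat.succ_lt_succ h2)

lemma lex_lt {α : Type*} [LinearOrder α] {n : ℕ} (f g : Fin n → α) (m : ℕ) (hm : m < n)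
    (hagree : ∀ i : Fin n, (i : ℕ) < m → f i = g i)
    (hlt : f ⟨m, hm⟩ < g ⟨m, hm⟩) : List.ofFn f < List.ofFn g := by
  show List.Lex (· < ·) _ _
  refine lex_aux m _ _ (by simpa using hm) (by simpa using hm) ?_ ?_
  · intro i hi h1 h2
    rw [List.getElem_ofFn, List.getElem_ofFn]
    exact hagree _ hi
  · rw [List.getElem_ofFn, List.getElem_ofFn]
    exact hlt

theorem stmt18 {n B L : ℕ} [NeZero n] (x x' : Fin n → Bool)
    (hL0 : LMSR x = 0) (hC : Csens x = B) (hB : 0 < B) (h5 : 5 * B ≤ n)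
    (hLeven : Even L) (hLB : L + 2 * B < n)
    (hx' : ∀ j : Fin n, x' j =
      if j.val = L then true
      else if L + 1 ≤ j.val ∧ j.val ≤ L + 2 * B then false
      else x j) :
    LMSR x' = L + 1 ∧ Odd (LMSR x') := by
  have hn : 0 < n := Nat.pos_of_ne_zero (NeZero.ne n)
  have hLlt : L < n := by omega
  have hM1 : L + 1 < n := by omega
  -- Csens property
  have hSne : {l | 0 < l ∧ ∀ i j : ℕ, i < j → j < n → substr x i l ≠ substr x j l}.Nonempty := by
    by_contra h
    rw [Set.not_nonempty_iff_eq_empty] at h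
    have hC' : sInf {l | 0 < l ∧ ∀ i j : ℕ, i < j → j < n → substr x i l ≠ substr x j l} = B := hC
    rw [h, Nat.sInf_empty] at hC'
    omega
  have hCs : ∀ i j : ℕ, i < j → j < n → substr x i B ≠ substr x j B := by
    have hmem := Nat.sInf_mem hSne
    have hC' : sInf {l | 0 < l ∧ ∀ i j : ℕ, i < j → j < n → substr x i l ≠ substr x j l} = B := hC
    rw [hC'] at hmem
    exact hmem.2
  -- x has no cyclic run of 2B zeros
  have hsub : ∀ q : ℕ, (∀ t, t < B → x ⟨(q + t) % n, Nat.mod_lt _ hn⟩ = false) →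
      substr x (q % n) B = List.ofFn (fun _ : Fin B => false) := by
    intro q hq
    unfold substr
    refine congrArg List.ofFn (funext fun t => ?_)
    show cyc x (q % n) (t : ℕ) = false
    have h1 : cyc x (q % n) (t : ℕ) = x ⟨(q + (t : ℕ)) % n, Nat.mod_lt _ hn⟩ := by
      show x _ = x _
      exact congrArg x (Fin.ext (by simp [Nat.mod_add_mod]))
    rw [h1]
    exact hq t t.isLt
  have noz : ∀ p : ℕ, ∃ t, t < 2 * B ∧ x ⟨(p + t) % n, Nat.mod_lt _ hn⟩ = true := by
    intro p
    by_contra h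
    push_neg at h
    have hall : ∀ t, t < 2 * B → x ⟨(p + t) % n, Nat.mod_lt _ hn⟩ = false := by
      intro t ht
      have := h t ht
      exact Bool.eq_false_iff.mpr this
    have h1 : substr x (p % n) B = List.ofFn (fun _ : Fin B => false) :=
      hsub p (fun t ht => hall t (by omega))
    have h2 : substr x ((p + B) % n) B = List.ofFn (fun _ : Fin B => false) := by
      refine hsub (p + B) (fun t ht => ?_)
      have := hall (B + t) (by omega)
      have harith : p + (B + t) = p + B + t := by omega
      rw [harith] at this
      exact this
    have hne : p % n ≠ (p + B) % n := by
      intro h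
      have h2' : (p + B) % n = p % n := h.symm
      have hmeq : p + B ≡ p + 0 [MOD n] := by
        unfold Nat.ModEq
        simpa using h2'
      have hB0 : B ≡ 0 [MOD n] := hmeq.add_left_cancel' p
      have hdvd : n ∣ B := (Nat.modEq_zero_iff_dvd).mp hB0
      have := Nat.le_of_dvd hB hdvd
      omega
    rcases Nat.lt_or_ge (p % n) ((p + B) % n) with hlt | hge
    · exact hCs _ _ hlt (Nat.mod_lt _ hn) (h1.trans h2.symm)
    · have hlt : (p + B) % n < p % n := lt_of_le_of_ne hge (Ne.symm hne)
      exact hCs _ _ hlt (Nat.mod_lt _ hn) (h2.trans h1.symm)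
  -- basic values of x'
  have hvL : V x' L = true := by
    rw [V_val x' L hLlt, hx']
    rw [if_pos rfl]
  have hvz : ∀ i, L + 1 ≤ i → i ≤ L + 2 * B → V x' i = false := by
    intro i h1 h2
    rw [V_val x' i (by omega), hx']
    rw [if_neg (by show ¬ (i = L); omega), if_pos (by exact ⟨h1, h2⟩)]
  -- zero-prefix machinery
  have ex : ∀ k, k < n → ∃ t, V x' (k + t) = true := by
    intro k hk
    refine ⟨L + n - k, ?_⟩
    rw [show k + (L + n - k) = L + n from by omega, V_add_n, hvL]
  set M := Nat.find (ex (L + 1) hM1) with hMdef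
  have hMspec : V x' (L + 1 + M) = true := Nat.find_spec (ex (L + 1) hM1)
  have hMfalse : ∀ t, t < M → V x' (L + 1 + t) = false := by
    intro t ht
    have := Nat.find_min (ex (L + 1) hM1) ht
    exact Bool.eq_false_iff.mpr this
  have hMn : M < n := by
    have hw : V x' (L + 1 + (n - 1)) = true := by
      rw [show L + 1 + (n - 1) = L + n from by omega, V_add_n, hvL]
    have := Nat.find_min' (ex (L + 1) hM1) hw
    omega
  have hM2B : 2 * B ≤ M := by
    by_contra h
    push_neg at h
    have := hvz (L + 1 + M) (by omega) (by omega)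
    rw [this] at hMspec
    exact Bool.false_ne_true hMspec
  -- key: any zero-prefix elsewhere is shorter than M
  have hkey : ∀ k, k < n → k ≠ L + 1 → ∀ m, (∀ t, t < m → V x' (k + t) = false) →
      V x' (k + m) = true → m < M := by
    intro k hk hne m hmf hmt
    by_contra hge
    push_neg at hge
    have hm2B : 2 * B ≤ m := le_trans hM2B hge
    have hkneL : k ≠ L := by
      intro h
      have := hmf 0 (by omega)
      rw [show k + 0 = L from by omega] at this
      rw [this] at hvL
      exact Bool.false_ne_true hvL
    have hdex : ∃ d, 1 ≤ d ∧ d + 1 ≤ n ∧ (L + d) % n = k ∧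
        ∀ t, V x' (L + d + t) = V x' (k + t) := by
      by_cases hLk : L < k
      · refine ⟨k - L, by omega, by omega, ?_, fun t => ?_⟩
        · rw [show L + (k - L) = k from by omega]
          exact Nat.mod_eq_of_lt hk
        · rw [show L + (k - L) + t = k + t from by omega]
      · have hkL : k < L := lt_of_le_of_ne (not_lt.mp hLk) hkneL
        refine ⟨k + n - L, by omega, by omega, ?_, fun t => ?_⟩
        · rw [show L + (k + n - L) = k + n from by omega, Nat.add_mod_right]
          exact Nat.mod_eq_of_lt hk
        · rw [show L + (k + n - L) + t = (k + t) + n from by omega, V_add_n]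
    obtain ⟨d, hd1, hdn, hdcong, hdval⟩ := hdex
    have hLdf : ∀ t, t < m → V x' (L + d + t) = false :=
      fun t ht => (hdval t).trans (hmf t ht)
    have hdm : d + m ≤ n := by
      by_contra h
      push_neg at h
      have := hLdf (n - d) (by omega)
      rw [show L + d + (n - d) = L + n from by omega, V_add_n] at this
      rw [this] at hvL
      exact Bool.false_ne_true hvL
    by_cases hd_1 : d = 1
    · apply hne
      rw [hd_1] at hdcong
      rw [Nat.mod_eq_of_lt hM1] at hdcong
      omega
    by_cases hdsmall : d ≤ 2 * B
    · have m2 : ∀ t, t < m + (d - 1) → V x' (L + 1 + t) = false := by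
        intro t ht
        by_cases htd : t < d - 1
        · exact hvz (L + 1 + t) (by omega) (by omega)
        · have := hLdf (t - (d - 1)) (by omega)
          rw [show L + d + (t - (d - 1)) = L + 1 + t from by omega] at this
          exact this
      have hMge : m + (d - 1) ≤ M := by
        by_contra h
        push_neg at h
        have := m2 M (by omega)
        rw [this] at hMspec
        exact Bool.false_ne_true hMspec
      omega
    · push_neg at hdsmall
      obtain ⟨t, ht2B, htx⟩ := noz (L + d)
      have hvf : V x' (L + d + t) = false := hLdf t (by omega)
      rw [V_eq] at hvf
      rw [hx'] at hvf
      have htm : t < m := by omega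
      have hj : (L + d + t) % n = L + d + t ∨
          (n ≤ L + d + t ∧ (L + d + t) % n = L + d + t - n) := by
        by_cases hlt : L + d + t < n
        · exact Or.inl (Nat.mod_eq_of_lt hlt)
        · refine Or.inr ⟨not_lt.mp hlt, ?_⟩
          rw [Nat.mod_eq_sub_mod (not_lt.mp hlt), Nat.mod_eq_of_lt (by omega)]
      have hc1 : ¬ ((⟨(L + d + t) % n, Nat.mod_lt _ (Nat.pos_of_ne_zero (NeZero.ne n))⟩ :
          Fin n) : ℕ) = L := by
        show ¬ (L + d + t) % n = L
        rcases hj with h | h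
        · rw [h]; omega
        · rw [h.2]; omega
      have hc2 : ¬ (L + 1 ≤ ((⟨(L + d + t) % n, Nat.mod_lt _ (Nat.pos_of_ne_zero (NeZero.ne n))⟩ :
          Fin n) : ℕ) ∧ ((⟨(L + d + t) % n, Nat.mod_lt _ (Nat.pos_of_ne_zero (NeZero.ne n))⟩ :
          Fin n) : ℕ) ≤ L + 2 * B) := by
        show ¬ (L + 1 ≤ (L + d + t) % n ∧ (L + d + t) % n ≤ L + 2 * B)
        rcases hj with h | h
        · rw [h]; omega
        · rw [h.2]; omega
      rw [if_neg hc1, if_neg hc2] at hvf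
      exact Bool.false_ne_true (hvf.symm.trans htx)
  -- strict minimality of rotation L+1
  have hstrict : ∀ k, k < n → k ≠ L + 1 → rotStr x' (L + 1) < rotStr x' k := by
    intro k hk hne
    have hexk := ex k hk
    set m := Nat.find hexk with hmdef
    have hmt : V x' (k + m) = true := Nat.find_spec hexk
    have hmf : ∀ t, t < m → V x' (k + t) = false := by
      intro t ht
      exact Bool.eq_false_iff.mpr (Nat.find_min hexk ht)
    have hmM : m < M := hkey k hk hne m hmf hmt
    show List.ofFn (fun t : Fin n => cyc x' (L + 1) (t : ℕ)) <
      List.ofFn (fun t : Fin n => cyc x' k (t : ℕ))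
    apply lex_lt _ _ m (lt_trans hmM hMn)
    · intro i hi
      show cyc x' (L + 1) (i : ℕ) = cyc x' k (i : ℕ)
      rw [V_cyc, V_cyc, hMfalse _ (lt_trans hi hmM), hmf _ hi]
    · show cyc x' (L + 1) m < cyc x' k m
      rw [V_cyc, V_cyc, hMfalse _ hmM, hmt]
      decide
  have hmin : IsMinRot x' (L + 1) := by
    refine ⟨hM1, fun k' hk' => ?_⟩
    by_cases h : k' = L + 1
    · rw [h]
    · exact le_of_lt (hstrict k' hk' h)
  have hset : {k | IsMinRot x' k} = {L + 1} := by
    ext k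
    simp only [Set.mem_setOf_eq, Set.mem_singleton_iff]
    constructor
    · rintro ⟨hk, hall⟩
      by_contra h
      exact absurd (hall (L + 1) hM1) (not_le_of_gt (hstrict k hk h))
    · rintro rfl
      exact hmin
  have hL1 : LMSR x' = L + 1 := by
    show sInf {k | IsMinRot x' k} = L + 1
    rw [hset]
    exact csInf_singleton _
  exact ⟨hL1, hL1 ▸ hLeven.add_one⟩
end
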